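/- arXiv:2008.01185 — 6 statements merged into one kernel-verified Lean document; each statement's English description precedes it below -/
import Mathlib

section
/- Condition (U) holds if and only if for every x ∈ ℝ one has sup_{g∈Γ*} g(x) = +∞ and inf_{g∈Γ*} g(x) = −∞, where Γ* is the semigroup generated by Γ under composition. Moreover, if (U) holds, then every nonempty Γ-invariant set M ⊆ ℝ is unbounded above and unbounded below. -/
open MeasureTheory Filter Set Function Topology
open scoped ENNReal NNReal

section SDS

variable {ι : Type*}

/-- An orientation-preserving homeomorphism of `ℝ`, modeled as a strictly increasing
surjection (such a map is automatically a homeomorphism of `ℝ`). -/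
def IsOPH (g : ℝ → ℝ) : Prop := StrictMono g ∧ Function.Surjective g

/-- The Markov chain `X_n^x = g_{ω (n-1)} ∘ ⋯ ∘ g_{ω 0} (x)` driven by the sequence `ω`. -/
def chain (G : ι → ℝ → ℝ) (ω : ℕ → ι) (x : ℝ) : ℕ → ℝ
  | 0 => x
  | n + 1 => G (ω n) (chain G ω x n)

/-- Composition `G l₀ ∘ G l₁ ∘ ⋯` along a list `l`. -/
def comps (G : ι → ℝ → ℝ) (l : List ι) : ℝ → ℝ := l.foldr (fun i f => G i ∘ f) id

/-- The semigroup `Γ*` generated by the maps `G i` under composition. -/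
def sgen (G : ι → ℝ → ℝ) : Set (ℝ → ℝ) := {f | ∃ l : List ι, l ≠ [] ∧ f = comps G l}

variable [MeasurableSpace ι]

/-- `Q` is the product measure `μm^{⊗ℕ}` on `ι^ℕ` (for a discrete base measure `μm`
this property characterizes the product measure). -/
def IsProd (μm : Measure ι) (Q : Measure (ℕ → ι)) : Prop :=
  ∀ (n : ℕ) (c : ℕ → ι),
    Q {ω : ℕ → ι | ∀ k < n, ω k = c k} = ∏ k ∈ Finset.range n, μm {c k}

/-- A Radon measure on `ℝ`: a Borel measure which is finite on compact sets. -/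
def IsRadon (ν : Measure ℝ) : Prop := ∀ K : Set ℝ, IsCompact K → ν K < ⊤

/-- Invariance of `ν` for the system generated by the discrete measure `μm` on the
maps `G i`:  `∫ f dν = Σ_g μ(g) ∫ f(g x) dν(x)` for every continuous compactly
supported `f`. -/
def IsInv (G : ι → ℝ → ℝ) (μm : Measure ι) (ν : Measure ℝ) : Prop :=
  ∀ f : ℝ → ℝ, Continuous f → HasCompactSupport f →
    ∫ x, f x ∂ν = ∑' i : ι, (μm {i}).toReal * ∫ x, f (G i x) ∂ν

/-- Ergodicity: `ν` is invariant and any Borel set whose restriction is again invariant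
is either null or conull. -/
def IsErg (G : ι → ℝ → ℝ) (μm : Measure ι) (ν : Measure ℝ) : Prop :=
  IsInv G μm ν ∧
    ∀ A : Set ℝ, MeasurableSet A → IsInv G μm (ν.restrict A) → ν A = 0 ∨ ν Aᶜ = 0

/-- The support of a measure: points all of whose open neighbourhoods have positive
measure. -/
def msupp (ν : Measure ℝ) : Set ℝ := {x | ∀ U : Set ℝ, IsOpen U → x ∈ U → 0 < ν U}

/-- Condition (R): there is a compact interval visited infinitely often, a.s., from any
starting point. -/
def CondR (G : ι → ℝ → ℝ) (Q : Measure (ℕ → ι)) : Prop :=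
  ∃ a b : ℝ, a ≤ b ∧ ∀ x : ℝ, ∀ᵐ ω ∂Q, ∃ᶠ n in atTop, chain G ω x n ∈ Icc a b

/-- Condition (C): there is an interval `I` such that any compact set can be mapped
into `I` by an element of the semigroup `Γ*`. -/
def CondC (G : ι → ℝ → ℝ) : Prop :=
  ∃ a b : ℝ, ∀ K : Set ℝ, IsCompact K → ∃ g ∈ sgen G, g '' K ⊆ Icc a b

/-- Condition (U): from any point one can move both up and down. -/
def CondU (G : ι → ℝ → ℝ) : Prop :=
  ∀ x : ℝ, ∃ i j : ι, G i x < x ∧ x < G j x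

end SDS

/-!
An order automorphism `e` of `ℝ` mapping a nonempty bounded-above set `M` into itself satisfies
`e (sup M) = sup (e '' M) ≤ sup M`, so it cannot move `sup M` upwards; under (U) some generator
does, hence every nonempty `Γ`-invariant set, in particular every `Γ*`-orbit, is unbounded
(and symmetrically below). Conversely, if no generator moves `x` up (or down), monotonicity
keeps the whole `Γ*`-orbit of `x` on that side of `x`.
-/

section OrderIso

variable {α : Type*} [ConditionallyCompleteLattice α]

theorem OrderIso.map_csSup_le_of_image_subset (e : α ≃o α) {M : Set α} (hne : M.Nonempty)
    (hbdd : BddAbove M) (hM : e '' M ⊆ M) : e (sSup M) ≤ sSup M := by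
  rw [e.map_csSup' hne hbdd]
  exact csSup_le_csSup hbdd (hne.image e) hM

theorem OrderIso.le_map_csInf_of_image_subset (e : α ≃o α) {M : Set α} (hne : M.Nonempty)
    (hbdd : BddBelow M) (hM : e '' M ⊆ M) : sInf M ≤ e (sInf M) := by
  rw [e.map_csInf' hne hbdd]
  exact csInf_le_csInf hbdd (hne.image e) hM

end OrderIso

section Semigroup

variable {ι : Type*} {G : ι → ℝ → ℝ}

def sgenOrbit (G : ι → ℝ → ℝ) (x : ℝ) : Set ℝ := (fun g => g x) '' sgen G

theorem apply_mem_sgenOrbit (i : ι) (x : ℝ) : G i x ∈ sgenOrbit G x :=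
  ⟨G i, ⟨[i], List.cons_ne_nil _ _, rfl⟩, rfl⟩

theorem image_sgenOrbit_subset (i : ι) (x : ℝ) : G i '' sgenOrbit G x ⊆ sgenOrbit G x := by
  rintro _ ⟨_, ⟨_, ⟨l, -, rfl⟩, rfl⟩, rfl⟩
  exact ⟨comps G (i :: l), ⟨i :: l, List.cons_ne_nil _ _, rfl⟩, rfl⟩

theorem comps_apply_le (hG : ∀ i, Monotone (G i)) {x : ℝ} (h : ∀ i, G i x ≤ x) :
    ∀ l : List ι, comps G l x ≤ x
  | [] => le_rfl
  | i :: l => ((hG i) (comps_apply_le hG h l)).trans (h i)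

theorem le_comps_apply (hG : ∀ i, Monotone (G i)) {x : ℝ} (h : ∀ i, x ≤ G i x) :
    ∀ l : List ι, x ≤ comps G l x
  | [] => le_rfl
  | i :: l => (h i).trans ((hG i) (le_comps_apply hG h l))

theorem sgenOrbit_nonempty (hU : CondU G) (x : ℝ) : (sgenOrbit G x).Nonempty :=
  let ⟨i, _⟩ := hU x
  ⟨_, apply_mem_sgenOrbit i x⟩

theorem not_bddAbove_of_image_subset (hG : ∀ i, IsOPH (G i)) (hU : CondU G)
    {M : Set ℝ} (hne : M.Nonempty) (hM : ∀ i, G i '' M ⊆ M) :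
    ¬ BddAbove M := fun hbdd => by
  obtain ⟨-, j, -, hj⟩ := hU (sSup M)
  exact hj.not_ge <| (StrictMono.orderIsoOfSurjective (G j) (hG j).1 (hG j).2)
    |>.map_csSup_le_of_image_subset hne hbdd (hM j)

theorem not_bddBelow_of_image_subset (hG : ∀ i, IsOPH (G i)) (hU : CondU G)
    {M : Set ℝ} (hne : M.Nonempty) (hM : ∀ i, G i '' M ⊆ M) :
    ¬ BddBelow M := fun hbdd => by
  obtain ⟨i, -, hi, -⟩ := hU (sInf M)
  exact hi.not_ge <| (StrictMono.orderIsoOfSurjective (G i) (hG i).1 (hG i).2)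
    |>.le_map_csInf_of_image_subset hne hbdd (hM i)

end Semigroup

theorem condU_iff_unbounded_orbits_general
    {ι : Type*}
    (G : ι → ℝ → ℝ) (hG : ∀ i, IsOPH (G i)) :
    (CondU G ↔ ∀ x : ℝ,
        (∀ M : ℝ, ∃ g ∈ sgen G, M < g x) ∧ (∀ M : ℝ, ∃ g ∈ sgen G, g x < M)) ∧
    (CondU G → ∀ M : Set ℝ, M.Nonempty → (∀ i, G i '' M ⊆ M) →
        ¬ BddAbove M ∧ ¬ BddBelow M) := by
  have hmono i : Monotone (G i) := (hG i).1.monotone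
  refine ⟨⟨fun hU x => ?_, fun h x => ?_⟩, fun hU M hne hM =>
    ⟨not_bddAbove_of_image_subset hG hU hne hM, not_bddBelow_of_image_subset hG hU hne hM⟩⟩
  · have hne := sgenOrbit_nonempty hU x
    have hinv i := image_sgenOrbit_subset (G := G) i x
    have hup := not_bddAbove_iff.1 (not_bddAbove_of_image_subset hG hU hne hinv)
    have hdown := not_bddBelow_iff.1 (not_bddBelow_of_image_subset hG hU hne hinv)
    exact ⟨fun M => by simpa [sgenOrbit] using hup M, fun M => by simpa [sgenOrbit] using hdown M⟩
  · obtain ⟨i, hi⟩ : ∃ i, G i x < x := by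
      by_contra! hc
      obtain ⟨_, ⟨l, -, rfl⟩, hl⟩ := (h x).2 x
      exact hl.not_ge (le_comps_apply hmono hc l)
    obtain ⟨j, hj⟩ : ∃ j, x < G j x := by
      by_contra! hc
      obtain ⟨_, ⟨l, -, rfl⟩, hl⟩ := (h x).1 x
      exact hl.not_ge (comps_apply_le hmono hc l)
    exact ⟨i, j, hi, hj⟩

/-- **Lemma.** Condition (U) holds iff from every point the semigroup `Γ*` reaches
arbitrarily high and arbitrarily low values; moreover under (U) every nonempty
`Γ`-invariant set is unbounded above and below. -/
theorem condU_iff_unbounded_orbits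
    {ι : Type*} [Countable ι]
    (G : ι → ℝ → ℝ) (hG : ∀ i, IsOPH (G i)) :
    (CondU G ↔ ∀ x : ℝ,
        (∀ M : ℝ, ∃ g ∈ sgen G, M < g x) ∧ (∀ M : ℝ, ∃ g ∈ sgen G, g x < M)) ∧
    (CondU G → ∀ M : Set ℝ, M.Nonempty → (∀ i, G i '' M ⊆ M) →
        ¬ BddAbove M ∧ ¬ BddBelow M) :=
  condU_iff_unbounded_orbits_general G hG
end

section
/- Assume condition (R) holds with recurrence interval I. Let ν be an invariant Radon measure possessing at least one atom, and let K be a compact interval such that I ⊆ K and ν({y}) > 0 for some y ∈ K. Then there exists x₀ ∈ K such that the set {h(x₀) : h ∈ (Γ⁻¹)*} ∩ K is finite, where (Γ⁻¹)* is the semigroup generated under composition by the inverses {g⁻¹ : g ∈ Γ}. -/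
open MeasureTheory Filter Set Function Topology
open scoped ENNReal NNReal

/-!
Let `t = ν {y₀} > 0` for an atom `y₀ ∈ K`. Testing invariance against bump functions gives
`∑ μ(g) ν {g⁻¹ y} ≤ ν {y}`, so `θ = min (ν {·}) t` is superharmonic for the backward operator
`Pθ(y) = ∑ μ(g) θ(g⁻¹ y)`. By duality with the forward chain, the defect `θ - Pθ` at `z`, times
the expected number of visits of the chain from `z` to `I`, is at most `ν I < ∞`; by (R) that
expected number is infinite, so `θ` is harmonic. As `θ ≤ t`, `θ y₀ = t` and all weights are
positive, `θ = t` along the whole backward orbit of `y₀`: each orbit point is an atom of mass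
`≥ t`, and `K` contains only finitely many of those.

The σ-algebra on the index set need not separate points. Choosing one index in each of its
atoms makes the weights sum to one without changing the law of the chain.
-/

lemma ENNReal.eq_of_tsum_mul_eq {ι : Type*} {q a : ι → ℝ≥0∞} {t : ℝ≥0∞} (hq : ∑' i, q i = 1)
    (ha : ∀ i, a i ≤ t) (ht : t ≠ ⊤) (h : ∑' i, q i * a i = t) {j : ι} (hj : q j ≠ 0) :
    a j = t := by
  by_contra hne
  have hqj : q j ≠ ⊤ := ne_top_of_le_ne_top ENNReal.one_ne_top (hq ▸ ENNReal.le_tsum j)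
  have hlt : ∑' i, q i * a i < ∑' i, q i * t :=
    ENNReal.tsum_lt_tsum (h.symm ▸ ht) (fun i => mul_le_mul_right (ha i) _)
      ((ENNReal.mul_lt_mul_iff_right hj hqj).2 ((ha j).lt_of_ne hne))
  rw [ENNReal.tsum_mul_right, hq, one_mul, h] at hlt
  exact lt_irrefl t hlt

lemma tsum_indicator_measure_singleton_le {α : Type*} [MeasurableSpace α]
    [MeasurableSingletonClass α] (μ : Measure α) (s : Set α) :
    ∑' x, s.indicator (fun x => μ {x}) x ≤ μ s := by
  rw [← tsum_subtype]
  calc ∑' x : s, μ {(x : α)} ≤ μ (⋃ x : s, {(x : α)}) :=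
        tsum_meas_le_meas_iUnion_of_disjoint μ (fun _ => measurableSet_singleton _)
          fun x y hxy => disjoint_singleton.2 (Subtype.coe_injective.ne hxy)
    _ = μ s := by rw [iUnion_of_singleton_coe]

lemma finite_setOf_mem_le_measure_singleton {α : Type*} [MeasurableSpace α]
    [MeasurableSingletonClass α] (μ : Measure α) {s : Set α} (hs : μ s ≠ ⊤) {t : ℝ≥0∞}
    (ht : 0 < t) : {x | x ∈ s ∧ t ≤ μ {x}}.Finite := by
  have := Measure.finite_const_le_meas_of_disjoint_iUnion μ ht (As := fun x : s => {(x : α)})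
    (fun _ => measurableSet_singleton _)
    (fun x y hxy => disjoint_singleton.2 (Subtype.coe_injective.ne hxy))
    (by rwa [iUnion_of_singleton_coe])
  exact (this.image Subtype.val).subset fun x hx => ⟨⟨x, hx.1⟩, hx.2, rfl⟩

lemma tsum_measure_eq_top_of_ae_frequently {α : Type*} [MeasurableSpace α] {μ : Measure α}
    [NeZero μ] {s : ℕ → Set α} (h : ∀ᵐ x ∂μ, ∃ᶠ n in atTop, x ∈ s n) :
    ∑' n, μ (s n) = ⊤ := by
  by_contra hs
  have hcover : univ ⊆ limsup s atTop ∪ {x | ¬ ∃ᶠ n in atTop, x ∈ s n} := fun x _ => by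
    by_cases hx : ∃ᶠ n in atTop, x ∈ s n
    · exact Or.inl (mem_limsup_iff_frequently_mem.2 hx)
    · exact Or.inr hx
  refine NeZero.ne μ (Measure.measure_univ_eq_zero.1 (le_zero_iff.1 ?_))
  calc μ univ ≤ μ (limsup s atTop) + μ {x | ¬ ∃ᶠ n in atTop, x ∈ s n} :=
        (measure_mono hcover).trans (measure_union_le _ _)
    _ = 0 := by rw [measure_limsup_atTop_eq_zero hs, ae_iff.1 h, add_zero]

section MeasurableAtom

variable {α : Type*} [MeasurableSpace α]

lemma mem_measurableAtom_comm {x y : α} : y ∈ measurableAtom x ↔ x ∈ measurableAtom y :=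
  ⟨fun h => measurableAtom_eq_of_mem h ▸ mem_measurableAtom_self x,
    fun h => measurableAtom_eq_of_mem h ▸ mem_measurableAtom_self y⟩

lemma measurableSet_of_measurableAtom_subset [Countable α] {s : Set α}
    (hs : ∀ x ∈ s, measurableAtom x ⊆ s) : MeasurableSet s := by
  have : s = ⋃ x ∈ s, measurableAtom x :=
    Subset.antisymm (fun x hx => mem_biUnion hx (mem_measurableAtom_self x))
      (iUnion₂_subset hs)
  rw [this]
  exact .biUnion s.to_countable fun x _ => .measurableAtom_of_countable x

lemma measure_measurableAtom_le (μ : Measure α) (x : α) : μ (measurableAtom x) ≤ μ {x} :=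
  calc μ (measurableAtom x) ≤ μ (toMeasurable μ {x}) :=
        measure_mono (measurableAtom_subset (measurableSet_toMeasurable μ _)
          (subset_toMeasurable μ _ rfl))
    _ = μ {x} := measure_toMeasurable _

lemma measure_preimage_le_of_mem_measurableAtom (μ : Measure α) {φ : α → α}
    (hφ : ∀ x, x ∈ measurableAtom (φ x)) (s : Set α) : μ (φ ⁻¹' s) ≤ μ s :=
  calc μ (φ ⁻¹' s) ≤ μ (toMeasurable μ s) :=
        measure_mono fun x hx => mem_of_mem_measurableAtom (hφ x)
          (measurableSet_toMeasurable μ s) (subset_toMeasurable μ s hx)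
    _ = μ s := measure_toMeasurable s

lemma mem_measurableAtom_pi {δ : Type*} {π : δ → Type*} [∀ a, MeasurableSpace (π a)]
    {x y : ∀ a, π a} (h : ∀ a, y a ∈ measurableAtom (x a)) : y ∈ measurableAtom x := by
  suffices ∀ s, MeasurableSet s → ∀ x y : ∀ a, π a,
      (∀ a, y a ∈ measurableAtom (x a)) → x ∈ s → y ∈ s by
    simp only [measurableAtom, mem_iInter]
    exact fun s hxs hs => this s hs x y h hxs
  intro s hs
  rw [MeasurableSpace.pi, MeasurableSpace.measurableSet_iSup] at hs
  induction hs with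
  | basic s hs =>
    obtain ⟨a, t, ht, rfl⟩ := hs
    exact fun x y h hx => mem_of_mem_measurableAtom (h a) ht hx
  | empty => exact fun _ _ _ h => h
  | compl s _ ih =>
    exact fun x y h hx hy => hx (ih y x (fun a => mem_measurableAtom_comm.1 (h a)) hy)
  | iUnion f _ ih =>
    intro x y h hx
    obtain ⟨n, hn⟩ := mem_iUnion.1 hx
    exact mem_iUnion.2 ⟨n, ih n x y h hn⟩

structure IsAtomSelector (s : α → α) : Prop where
  mem : ∀ x, s x ∈ measurableAtom x
  eq_of_mem : ∀ x, ∀ y ∈ measurableAtom x, s y = s x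

lemma exists_isAtomSelector_apply_eq (x₀ : α) : ∃ s : α → α, IsAtomSelector s ∧ s x₀ = x₀ := by
  classical
  have : Nonempty α := ⟨x₀⟩
  let s : α → α := fun x =>
    if x ∈ measurableAtom x₀ then x₀ else Classical.epsilon (· ∈ measurableAtom x)
  refine ⟨s, ⟨fun x => ?_, fun x y hy => ?_⟩, if_pos (mem_measurableAtom_self x₀)⟩
  · by_cases hx : x ∈ measurableAtom x₀
    · simpa [s, hx] using mem_measurableAtom_comm.1 hx
    · simpa [s, hx] using Classical.epsilon_spec ⟨x, mem_measurableAtom_self x⟩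
  · have hxy : measurableAtom y = measurableAtom x := measurableAtom_eq_of_mem hy
    have hmem : y ∈ measurableAtom x₀ ↔ x ∈ measurableAtom x₀ := by
      rw [mem_measurableAtom_comm, hxy, ← mem_measurableAtom_comm]
    simp only [s, hmem, hxy]

namespace IsAtomSelector

variable {s : α → α} (hs : IsAtomSelector s)
include hs

lemma mem_measurableAtom_apply (x : α) : x ∈ measurableAtom (s x) :=
  mem_measurableAtom_comm.1 (hs.mem x)

lemma apply_apply (x : α) : s (s x) = s x := hs.eq_of_mem x _ (hs.mem x)

lemma preimage_singleton_subset (x : α) : s ⁻¹' {x} ⊆ measurableAtom x := by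
  rintro y rfl
  exact hs.mem_measurableAtom_apply y

lemma measurableSet_preimage_singleton [Countable α] (x : α) : MeasurableSet (s ⁻¹' {x}) :=
  measurableSet_of_measurableAtom_subset fun y hy z hz => (hs.eq_of_mem y z hz).trans hy

lemma tsum_measure_preimage_singleton [Countable α] (μ : Measure α) :
    ∑' x, μ (s ⁻¹' {x}) = μ univ := by
  rw [← measure_iUnion (fun x y hxy => Disjoint.preimage s (disjoint_singleton.2 hxy))
    hs.measurableSet_preimage_singleton, ← preimage_iUnion, iUnion_of_singleton, preimage_univ]

end IsAtomSelector

end MeasurableAtom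

section MarkovOperator

variable {ι X : Type*} (e : ι → X ≃ X) (q : ι → ℝ≥0∞)

noncomputable def markovOp (f : X → ℝ≥0∞) (x : X) : ℝ≥0∞ := ∑' i, q i * f (e i x)

noncomputable def dualMarkovOp : (X → ℝ≥0∞) →+ (X → ℝ≥0∞) where
  toFun h y := ∑' i, q i * h ((e i).symm y)
  map_zero' := by ext; simp
  map_add' h h' := by ext y; simp [mul_add, ENNReal.tsum_add]

lemma dualMarkovOp_apply (h : X → ℝ≥0∞) (y : X) :
    dualMarkovOp e q h y = ∑' i, q i * h ((e i).symm y) := rfl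

lemma dualMarkovOp_mono : Monotone (dualMarkovOp e q) := fun _ _ hle _ =>
  ENNReal.tsum_le_tsum fun _ => mul_le_mul_right (hle _) _

lemma tsum_markovOp_mul (f h : X → ℝ≥0∞) :
    ∑' x, markovOp e q f x * h x = ∑' y, f y * dualMarkovOp e q h y := by
  calc ∑' x, markovOp e q f x * h x = ∑' i, q i * ∑' x, f (e i x) * h x := by
        simp only [markovOp, ← ENNReal.tsum_mul_right, ← ENNReal.tsum_mul_left, mul_assoc]
        exact ENNReal.tsum_comm
    _ = ∑' i, q i * ∑' y, f y * h ((e i).symm y) := by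
        refine tsum_congr fun i => congrArg (q i * ·) ?_
        simpa using (e i).tsum_eq fun y => f y * h ((e i).symm y)
    _ = ∑' y, f y * dualMarkovOp e q h y := by
        simp only [dualMarkovOp_apply, ← ENNReal.tsum_mul_left, mul_left_comm (f _)]
        exact ENNReal.tsum_comm

lemma tsum_markovOp_iterate_mul (n : ℕ) (f h : X → ℝ≥0∞) :
    ∑' x, (markovOp e q)^[n] f x * h x = ∑' y, f y * (dualMarkovOp e q)^[n] h y := by
  induction n generalizing f with
  | zero => rfl
  | succ n ih => rw [iterate_succ_apply, ih, tsum_markovOp_mul, iterate_succ_apply']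

variable {e q}

lemma sum_dualMarkovOp_iterate_sub_le {θ : X → ℝ≥0∞} (hθ : dualMarkovOp e q θ ≤ θ) (N : ℕ) :
    ∑ n ∈ Finset.range N, (dualMarkovOp e q)^[n] (θ - dualMarkovOp e q θ) ≤ θ := by
  induction N with
  | zero => simp
  | succ N ih =>
    rw [Finset.sum_range_succ']
    simp only [iterate_succ_apply', ← map_sum, iterate_zero_apply]
    calc dualMarkovOp e q (∑ n ∈ Finset.range N, (dualMarkovOp e q)^[n] (θ - dualMarkovOp e q θ))
          + (θ - dualMarkovOp e q θ)
        ≤ dualMarkovOp e q θ + (θ - dualMarkovOp e q θ) := by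
          gcongr; exact dualMarkovOp_mono e q ih
      _ = θ := add_tsub_cancel_of_le hθ

lemma dualMarkovOp_min_le (hq : ∑' i, q i ≤ 1) {m : X → ℝ≥0∞} (hm : dualMarkovOp e q m ≤ m)
    (t : ℝ≥0∞) :
    dualMarkovOp e q (fun y => min (m y) t) ≤ fun y => min (m y) t := fun y =>
  le_min ((dualMarkovOp_mono e q (fun x => min_le_left (m x) t) y).trans (hm y)) <|
    calc dualMarkovOp e q (fun y => min (m y) t) y ≤ ∑' i, q i * t :=
          ENNReal.tsum_le_tsum fun i => mul_le_mul_right (min_le_right _ _) _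
      _ ≤ t := by rw [ENNReal.tsum_mul_right]; exact mul_le_of_le_one_left zero_le hq

/-- The defect `θ - Pθ` at `z`, weighted by the expected number of visits to `S` from `z`,
is bounded by the mass of `θ` on `S`. -/
lemma dualMarkovOp_apply_eq_of_tsum_iterate_eq_top {θ : X → ℝ≥0∞}
    (hθ : dualMarkovOp e q θ ≤ θ) {S : Set X} (hS : ∑' y, S.indicator θ y ≠ ⊤) {z : X}
    (hz : ∑' n, (markovOp e q)^[n] (S.indicator 1) z = ⊤) :
    dualMarkovOp e q θ z = θ z := by
  set η := θ - dualMarkovOp e q θ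
  have hbound : ∀ N, (∑ n ∈ Finset.range N, (markovOp e q)^[n] (S.indicator 1) z) * η z
      ≤ ∑' y, S.indicator θ y := fun N =>
    calc (∑ n ∈ Finset.range N, (markovOp e q)^[n] (S.indicator 1) z) * η z
        ≤ ∑' x, (∑ n ∈ Finset.range N, (markovOp e q)^[n] (S.indicator 1) x) * η x :=
          ENNReal.le_tsum (f := fun x => _ * η x) z
      _ = ∑' y, S.indicator 1 y * ∑ n ∈ Finset.range N, (dualMarkovOp e q)^[n] η y := by
          simp only [Finset.sum_mul, Finset.mul_sum]
          rw [Summable.tsum_finsetSum fun _ _ => ENNReal.summable,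
            Summable.tsum_finsetSum fun _ _ => ENNReal.summable]
          simp only [tsum_markovOp_iterate_mul]
      _ ≤ ∑' y, S.indicator 1 y * θ y := by
          gcongr with y
          simpa using sum_dualMarkovOp_iterate_sub_le hθ N y
      _ = ∑' y, S.indicator θ y := by
          refine tsum_congr fun y => ?_
          by_cases hy : y ∈ S <;> simp [hy]
  have hη : ⊤ * η z ≤ ∑' y, S.indicator θ y := by
    rw [← hz, ENNReal.tsum_eq_iSup_nat, ENNReal.iSup_mul]
    exact iSup_le hbound
  have hη0 : η z = 0 := by
    by_contra h
    rw [ENNReal.top_mul h, top_le_iff] at hη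
    exact hS hη
  exact le_antisymm (hθ z) (tsub_eq_zero_iff_le.1 hη0)

end MarkovOperator

lemma chain_congr {ι : Type*} (G : ι → ℝ → ℝ) (x : ℝ) {ω ω' : ℕ → ι} {n : ℕ}
    (h : ∀ k < n, ω k = ω' k) : chain G ω x n = chain G ω' x n := by
  induction n with
  | zero => rfl
  | succ n ih =>
    rw [chain, chain, h n n.lt_succ_self, ih fun k hk => h k (hk.trans n.lt_succ_self)]

section Product

variable {ι : Type*} [MeasurableSpace ι] {μm : Measure ι} {Q : Measure (ℕ → ι)}

lemma IsProd.isProbabilityMeasure [IsProbabilityMeasure μm] (hQ : IsProd μm Q) :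
    IsProbabilityMeasure Q := by
  obtain ⟨i⟩ := nonempty_of_isProbabilityMeasure μm
  exact ⟨by simpa using hQ 0 fun _ => i⟩

variable {s : ι → ι}

lemma IsProd.measure_setOf_comp_eq_le (hQ : IsProd μm Q) (hs : IsAtomSelector s) (m : ℕ)
    (c : ℕ → ι) :
    Q {ω | ∀ k < m, s (ω k) = c k} ≤ ∏ k ∈ Finset.range m, μm (s ⁻¹' {c k}) := by
  by_cases hc : ∀ k < m, s (c k) = c k
  · calc Q {ω | ∀ k < m, s (ω k) = c k} = Q ((s ∘ ·) ⁻¹' {ω | ∀ k < m, ω k = c k}) := rfl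
      _ ≤ Q {ω | ∀ k < m, ω k = c k} :=
          measure_preimage_le_of_mem_measurableAtom Q
            (fun ω => mem_measurableAtom_pi fun k => hs.mem_measurableAtom_apply (ω k)) _
      _ = ∏ k ∈ Finset.range m, μm {c k} := hQ m c
      _ ≤ ∏ k ∈ Finset.range m, μm (s ⁻¹' {c k}) := Finset.prod_le_prod' fun k hk =>
          measure_mono (singleton_subset_iff.2 (hc k (Finset.mem_range.1 hk)))
  · push Not at hc
    obtain ⟨k, hk, hck⟩ := hc
    calc Q {ω | ∀ k < m, s (ω k) = c k} ≤ Q ∅ :=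
          measure_mono fun ω hω => hck (by rw [← hω k hk, hs.apply_apply])
      _ ≤ _ := by simp

variable (e : ι → ℝ ≃ ℝ)

lemma IsProd.measure_chain_mem_le [Countable ι] (hQ : IsProd μm Q) (hs : IsAtomSelector s)
    (S : Set ℝ) (z : ℝ) (n m : ℕ) (c : ℕ → ι) :
    Q {ω | (∀ k < m, s (ω k) = c k) ∧ chain (fun i => e i) (s ∘ ω) z (m + n) ∈ S}
      ≤ (∏ k ∈ Finset.range m, μm (s ⁻¹' {c k}))
        * (markovOp e fun i => μm (s ⁻¹' {i}))^[n] (S.indicator 1)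
          (chain (fun i => e i) c z m) := by
  induction n generalizing m c with
  | zero =>
    by_cases hcS : chain (fun i => e i) c z m ∈ S
    · simpa [hcS] using
        (measure_mono fun ω hω => hω.1).trans (hQ.measure_setOf_comp_eq_le hs m c)
    · calc _ ≤ Q ∅ := measure_mono fun ω (hω : _ ∧ _) => hcS (chain_congr _ z hω.1 ▸ hω.2)
        _ ≤ _ := by simp
  | succ n ih =>
    set q : ι → ℝ≥0∞ := fun i => μm (s ⁻¹' {i})
    have hcover :
        {ω | (∀ k < m, s (ω k) = c k) ∧ chain (fun i => e i) (s ∘ ω) z (m + (n + 1)) ∈ S} ⊆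
          ⋃ i, {ω | (∀ k < m + 1, s (ω k) = update c m i k)
            ∧ chain (fun i => e i) (s ∘ ω) z (m + 1 + n) ∈ S} := by
      rintro ω ⟨hω, hωS⟩
      refine mem_iUnion.2 ⟨s (ω m), fun k hk => ?_, by rwa [add_right_comm, add_assoc]⟩
      rcases (Nat.lt_succ_iff_lt_or_eq.1 hk) with hk | rfl
      · rw [update_of_ne hk.ne, hω k hk]
      · rw [update_self]
    have hstep : ∀ i, (∏ k ∈ Finset.range (m + 1), q (update c m i k))
          * (markovOp e q)^[n] (S.indicator 1) (chain (fun i => e i) (update c m i) z (m + 1))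
        = (∏ k ∈ Finset.range m, q (c k)) * (q i * (markovOp e q)^[n] (S.indicator 1)
          (e i (chain (fun i => e i) c z m))) := fun i => by
      rw [Finset.prod_range_succ, update_self, mul_assoc, chain,
        chain_congr _ z fun k hk => update_of_ne hk.ne _ _, update_self,
        Finset.prod_congr rfl fun k hk => by rw [update_of_ne (Finset.mem_range.1 hk).ne]]
    calc _ ≤ ∑' i, Q {ω | (∀ k < m + 1, s (ω k) = update c m i k)
          ∧ chain (fun i => e i) (s ∘ ω) z (m + 1 + n) ∈ S} :=
          (measure_mono hcover).trans (measure_iUnion_le _)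
      _ ≤ ∑' i, (∏ k ∈ Finset.range m, q (c k)) * (q i * (markovOp e q)^[n] (S.indicator 1)
          (e i (chain (fun i => e i) c z m))) :=
          ENNReal.tsum_le_tsum fun i => (ih (m + 1) (update c m i)).trans_eq (hstep i)
      _ = _ := by rw [ENNReal.tsum_mul_left, iterate_succ_apply']; rfl

lemma IsProd.tsum_markovOp_iterate_eq_top [Countable ι] [IsProbabilityMeasure μm]
    (hQ : IsProd μm Q) (hs : IsAtomSelector s) {S : Set ℝ} {z : ℝ}
    (hR : ∀ᵐ ω ∂Q, ∃ᶠ n in atTop, chain (fun i => e i) ω z n ∈ S) :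
    ∑' n, (markovOp e fun i => μm (s ⁻¹' {i}))^[n] (S.indicator 1) z = ⊤ := by
  have := hQ.isProbabilityMeasure
  obtain ⟨i⟩ := nonempty_of_isProbabilityMeasure μm
  have hRs : ∀ᵐ ω ∂Q, ∃ᶠ n in atTop, chain (fun i => e i) (s ∘ ω) z n ∈ S :=
    ae_iff.2 <| le_zero_iff.1 <| (measure_preimage_le_of_mem_measurableAtom Q
      (fun ω => mem_measurableAtom_pi fun k => hs.mem_measurableAtom_apply (ω k)) _).trans
        (ae_iff.1 hR).le
  refine top_unique ((tsum_measure_eq_top_of_ae_frequently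
    (s := fun n => {ω | chain (fun i => e i) (s ∘ ω) z n ∈ S}) hRs).symm.le.trans
      (ENNReal.tsum_le_tsum fun n => ?_))
  simpa [chain] using hQ.measure_chain_mem_le e hs S z n 0 fun _ => i

end Product

section Invariance

variable {ι : Type*} [MeasurableSpace ι] {μm : Measure ι} {ν : Measure ℝ}
  {e : ι → ℝ ≃ₜ ℝ}

lemma IsRadon.isFiniteMeasureOnCompacts (hrad : IsRadon ν) : IsFiniteMeasureOnCompacts ν :=
  ⟨hrad⟩

lemma integrable_comp_homeomorph_of_hasCompactSupport [IsFiniteMeasureOnCompacts ν]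
    {f : ℝ → ℝ} (hf : Continuous f) (hfc : HasCompactSupport f) (g : ℝ ≃ₜ ℝ) :
    Integrable (fun x => f (g x)) ν :=
  (hf.comp g.continuous).integrable_of_hasCompactSupport (hfc.comp_homeomorph g)

/-- `IsInv` alone says nothing when the series diverges (its `tsum` is then `0`); adding a
bump at an atom rules this out. -/
lemma IsInv.summable (hinv : IsInv (fun i => e i) μm ν) (hrad : IsRadon ν)
    (hatom : ∃ y, 0 < ν {y}) {f : ℝ → ℝ} (hf : Continuous f) (hfc : HasCompactSupport f)
    (hf0 : 0 ≤ f) : Summable fun i => (μm {i}).toReal * ∫ x, f (e i x) ∂ν := by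
  have := hrad.isFiniteMeasureOnCompacts
  obtain ⟨y, hy⟩ := hatom
  let b : ContDiffBump y := ⟨1, 2, one_pos, one_lt_two⟩
  have hg : Continuous (f + ⇑b) := hf.add b.continuous
  have hgc : HasCompactSupport (f + ⇑b) := hfc.add b.hasCompactSupport
  have hg0 : 0 ≤ f + ⇑b := add_nonneg hf0 fun x => b.nonneg
  by_contra hns
  have hgs : ¬ Summable fun i => (μm {i}).toReal * ∫ x, (f + ⇑b) (e i x) ∂ν := fun h =>
    hns <| h.of_nonneg_of_le
      (fun i => mul_nonneg ENNReal.toReal_nonneg (integral_nonneg fun x => hf0 (e i x)))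
      fun i => mul_le_mul_of_nonneg_left (integral_mono
        (integrable_comp_homeomorph_of_hasCompactSupport hf hfc (e i))
        (integrable_comp_homeomorph_of_hasCompactSupport hg hgc (e i))
        fun x => le_add_of_nonneg_right b.nonneg) ENNReal.toReal_nonneg
  have hzero : ∫ x, (f + ⇑b) x ∂ν = 0 :=
    (hinv _ hg hgc).trans (tsum_eq_zero_of_not_summable hgs)
  have hpos : 0 < ∫ x, (f + ⇑b) x ∂ν := by
    refine (integral_pos_iff_support_of_nonneg hg0 (hg.integrable_of_hasCompactSupport hgc)).2
      (hy.trans_le (measure_mono (singleton_subset_iff.2 ?_)))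
    have : b y = 1 := b.one_of_mem_closedBall (Metric.mem_closedBall_self zero_le_one)
    simp only [mem_support, Pi.add_apply, this]
    linarith [hf0 y, show (0 : ℝ → ℝ) y = 0 from rfl]
  exact hpos.ne' hzero

lemma IsInv.lintegral_eq_tsum [IsFiniteMeasure μm] (hinv : IsInv (fun i => e i) μm ν)
    (hrad : IsRadon ν) (hatom : ∃ y, 0 < ν {y}) {f : ℝ → ℝ} (hf : Continuous f)
    (hfc : HasCompactSupport f) (hf0 : 0 ≤ f) :
    ∫⁻ x, ENNReal.ofReal (f x) ∂ν = ∑' i, μm {i} * ∫⁻ x, ENNReal.ofReal (f (e i x)) ∂ν := by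
  have := hrad.isFiniteMeasureOnCompacts
  calc ∫⁻ x, ENNReal.ofReal (f x) ∂ν = ENNReal.ofReal (∫ x, f x ∂ν) :=
        (ofReal_integral_eq_lintegral_ofReal (hf.integrable_of_hasCompactSupport hfc)
          (ae_of_all _ hf0)).symm
    _ = ∑' i, ENNReal.ofReal ((μm {i}).toReal * ∫ x, f (e i x) ∂ν) := by
        rw [hinv f hf hfc]
        exact ENNReal.ofReal_tsum_of_nonneg
          (fun i => mul_nonneg ENNReal.toReal_nonneg (integral_nonneg fun x => hf0 (e i x)))
          (hinv.summable hrad hatom hf hfc hf0)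
    _ = ∑' i, μm {i} * ∫⁻ x, ENNReal.ofReal (f (e i x)) ∂ν := by
        refine tsum_congr fun i => ?_
        rw [ENNReal.ofReal_mul ENNReal.toReal_nonneg, ENNReal.ofReal_toReal (measure_ne_top μm _),
          ofReal_integral_eq_lintegral_ofReal
            (integrable_comp_homeomorph_of_hasCompactSupport hf hfc (e i))
            (ae_of_all _ fun x => hf0 (e i x))]

lemma IsInv.tsum_mul_measure_singleton_le [IsFiniteMeasure μm] (hinv : IsInv (fun i => e i) μm ν)
    (hrad : IsRadon ν) (hatom : ∃ y, 0 < ν {y}) (y : ℝ) :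
    ∑' i, μm {i} * ν {(e i).symm y} ≤ ν {y} := by
  have hball : ∀ ε > 0, ∑' i, μm {i} * ν {(e i).symm y} ≤ ν (Metric.closedBall y ε) := by
    intro ε hε
    let b : ContDiffBump y := ⟨ε / 2, ε, half_pos hε, half_lt_self hε⟩
    have hby : ENNReal.ofReal (b y) = 1 := by
      rw [b.one_of_mem_closedBall (Metric.mem_closedBall_self (half_pos hε).le), ENNReal.ofReal_one]
    calc ∑' i, μm {i} * ν {(e i).symm y}
        ≤ ∑' i, μm {i} * ∫⁻ x, ENNReal.ofReal (b (e i x)) ∂ν := by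
          gcongr with i
          calc ν {(e i).symm y} = ∫⁻ x in {(e i).symm y}, ENNReal.ofReal (b (e i x)) ∂ν := by
                rw [lintegral_singleton, Homeomorph.apply_symm_apply, hby, one_mul]
            _ ≤ _ := setLIntegral_le_lintegral _ _
      _ = ∫⁻ x, ENNReal.ofReal (b x) ∂ν :=
          (hinv.lintegral_eq_tsum hrad hatom b.continuous b.hasCompactSupport
            fun x => b.nonneg).symm
      _ ≤ ∫⁻ x, (Metric.closedBall y ε).indicator 1 x ∂ν := by
          refine lintegral_mono fun x => ?_
          by_cases hx : x ∈ Metric.closedBall y ε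
          · simpa [hx] using b.le_one
          · have : b x = 0 := notMem_support.1 fun h =>
              hx (Metric.ball_subset_closedBall (b.support_eq ▸ h))
            simp [this]
      _ = ν (Metric.closedBall y ε) := lintegral_indicator_one measurableSet_closedBall
  have hlim := tendsto_measure_cthickening_of_isClosed (μ := ν) (s := {y})
    ⟨1, one_pos, by
      rw [Metric.cthickening_singleton _ zero_le_one]; exact (hrad _ (isCompact_closedBall y 1)).ne⟩
    isClosed_singleton
  refine ge_of_tendsto (hlim.mono_left (nhdsWithin_le_nhds (s := Ioi 0))) ?_
  filter_upwards [self_mem_nhdsWithin] with ε (hε : 0 < ε)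
  rw [Metric.cthickening_singleton _ hε.le]
  exact hball ε hε

end Invariance

lemma IsInv.measure_singleton_le_symm {ι : Type*} [Countable ι] [MeasurableSpace ι]
    {μm : Measure ι} [IsProbabilityMeasure μm] {ν : Measure ℝ} {e : ι → ℝ ≃ₜ ℝ}
    (hinv : IsInv (fun i => e i) μm ν) (hrad : IsRadon ν) {Q : Measure (ℕ → ι)}
    (hQ : IsProd μm Q) {a b : ℝ}
    (hR : ∀ x, ∀ᵐ ω ∂Q, ∃ᶠ n in atTop, chain (fun i => e i) ω x n ∈ Icc a b) {i : ι}
    (hi : 0 < μm {i}) (y₀ : ℝ) : ν {y₀} ≤ ν {(e i).symm y₀} := by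
  rcases eq_or_ne (ν {y₀}) 0 with h0 | h0
  · simp [h0]
  set t := ν {y₀}
  have ht : t ≠ ⊤ := (hrad _ isCompact_singleton).ne
  obtain ⟨s, hs, hsi⟩ := exists_isAtomSelector_apply_eq i
  set q : ι → ℝ≥0∞ := fun j => μm (s ⁻¹' {j})
  set θ : ℝ → ℝ≥0∞ := fun y => min (ν {y}) t
  have hq : ∑' j, q j = 1 := by rw [hs.tsum_measure_preimage_singleton, measure_univ]
  have hν : dualMarkovOp (fun j => (e j).toEquiv) q (fun y => ν {y}) ≤ fun y => ν {y} :=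
    fun y => (ENNReal.tsum_le_tsum fun j => mul_le_mul_left ((measure_mono
      (hs.preimage_singleton_subset j)).trans (measure_measurableAtom_le μm j)) _).trans
        (hinv.tsum_mul_measure_singleton_le hrad ⟨y₀, pos_iff_ne_zero.2 h0⟩ y)
  have hθ := dualMarkovOp_min_le hq.le hν t
  have hθS : ∑' y, (Icc a b).indicator θ y ≠ ⊤ :=
    ne_top_of_le_ne_top (hrad _ isCompact_Icc).ne <| (ENNReal.tsum_le_tsum fun y =>
      indicator_le_indicator (f := θ) (g := fun y => ν {y}) (min_le_left _ _)).trans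
        (tsum_indicator_measure_singleton_le ν _)
  have hharm : dualMarkovOp (fun j => (e j).toEquiv) q θ y₀ = θ y₀ :=
    dualMarkovOp_apply_eq_of_tsum_iterate_eq_top hθ hθS
      (hQ.tsum_markovOp_iterate_eq_top (fun j => (e j).toEquiv) hs (hR y₀))
  have hqi : q i ≠ 0 :=
    (hi.trans_le (measure_mono (t := s ⁻¹' {i}) (singleton_subset_iff.2 hsi))).ne'
  exact min_eq_right_iff.1 (ENNReal.eq_of_tsum_mul_eq hq (fun j => min_le_right _ _) ht
    (hharm.trans (min_self t)) hqi)

theorem invariant_measure_with_atom_finite_inverse_orbit_general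
    {ι : Type*} [Countable ι] [MeasurableSpace ι]
    (G : ι → ℝ → ℝ) (hG : ∀ i, IsOPH (G i))
    (μm : Measure ι) [IsProbabilityMeasure μm] (hpos : ∀ i, 0 < μm {i})
    (Q : Measure (ℕ → ι)) (hQ : IsProd μm Q)
    (a b : ℝ)
    (hR : ∀ x : ℝ, ∀ᵐ ω ∂Q, ∃ᶠ n in atTop, chain G ω x n ∈ Icc a b)
    (ν : Measure ℝ) (hrad : IsRadon ν) (hinv : IsInv G μm ν)
    (c d : ℝ)
    (hatomK : ∃ y ∈ Icc c d, 0 < ν {y}) :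
    ∃ x₀ ∈ Icc c d,
      Set.Finite {y | (∃ f ∈ sgen (fun i => Function.invFun (G i)), f x₀ = y) ∧
        y ∈ Icc c d} := by
  obtain ⟨y₀, hy₀K, hy₀⟩ := hatomK
  let e : ι → ℝ ≃ₜ ℝ := fun i => ((hG i).1.orderIsoOfSurjective (G i) (hG i).2).toHomeomorph
  have he : ∀ i, invFun (G i) = (e i).symm := fun i => funext fun y =>
    (hG i).1.injective <| (rightInverse_invFun (hG i).2 y).trans ((e i).apply_symm_apply y).symm
  have horbit : ∀ f ∈ sgen (fun i => invFun (G i)), ν {y₀} ≤ ν {f y₀} := by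
    rintro _ ⟨l, -, rfl⟩
    induction l with
    | nil => exact le_rfl
    | cons i l ih =>
      calc ν {y₀} ≤ ν {comps (fun i => invFun (G i)) l y₀} := ih
        _ ≤ ν {(e i).symm (comps (fun i => invFun (G i)) l y₀)} :=
          hinv.measure_singleton_le_symm (e := e) hrad hQ hR (hpos i) _
        _ = ν {comps (fun i => invFun (G i)) (i :: l) y₀} := by rw [← he i]; rfl
  refine ⟨y₀, hy₀K,
    (finite_setOf_mem_le_measure_singleton ν (hrad (Icc c d) isCompact_Icc).ne hy₀).subset ?_⟩
  rintro y ⟨⟨f, hf, rfl⟩, hy⟩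
  exact ⟨hy, horbit f hf⟩

/-- **Lemma (measures with atoms).** Assume (R) holds with recurrence interval
`[a,b]`. If `ν` is an invariant Radon measure possessing an atom, and `K = [c,d]` is a
compact interval containing `[a,b]` and an atom of `ν`, then there is `x₀ ∈ K` whose
orbit under the semigroup generated by the inverse maps meets `K` in a finite set. -/
theorem invariant_measure_with_atom_finite_inverse_orbit
    {ι : Type*} [Countable ι] [MeasurableSpace ι]
    (G : ι → ℝ → ℝ) (hG : ∀ i, IsOPH (G i))
    (μm : Measure ι) [IsProbabilityMeasure μm] (hpos : ∀ i, 0 < μm {i})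
    (Q : Measure (ℕ → ι)) (hQ : IsProd μm Q)
    (a b : ℝ) (hab : a ≤ b)
    (hR : ∀ x : ℝ, ∀ᵐ ω ∂Q, ∃ᶠ n in atTop, chain G ω x n ∈ Icc a b)
    (ν : Measure ℝ) (hrad : IsRadon ν) (hinv : IsInv G μm ν)
    (hatom : ∃ y : ℝ, 0 < ν {y})
    (c d : ℝ) (hK : Icc a b ⊆ Icc c d)
    (hatomK : ∃ y ∈ Icc c d, 0 < ν {y}) :
    ∃ x₀ ∈ Icc c d,
      Set.Finite {y | (∃ f ∈ sgen (fun i => Function.invFun (G i)), f x₀ = y) ∧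
        y ∈ Icc c d} :=
  invariant_measure_with_atom_finite_inverse_orbit_general G hG μm hpos Q hQ a b hR ν hrad hinv c d
    hatomK
end

section
/- Assume conditions (C) and (U) hold. Then any two nonempty closed Γ-invariant subsets M₁, M₂ of ℝ have nonempty intersection: M₁ ∩ M₂ ≠ ∅. -/
open MeasureTheory Filter Set Function Topology
open scoped ENNReal NNReal

/-!
If `M₁` and `M₂` were disjoint, their traces on the interval `I = [a, b]` of condition (C) would
be at distance at least some `δ > 0`. By (U) a nonempty closed invariant set has no largest
element, so it is unbounded above; hence from any point one can climb through `n` alternations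
`y < q < p` with `q ∈ M₂`, `p ∈ M₁`. An element of `Γ*` squeezing such a chain into `I` keeps
the alternation and the order, so every alternation costs a length `δ` inside `I`, which is
impossible once `n δ > b - a`.
-/

theorem Metric.exists_pos_forall_lt_dist {α : Type*} [PseudoMetricSpace α] {s t : Set α}
    (hs : IsCompact s) (ht : IsClosed t) (hst : Disjoint s t) :
    ∃ δ : ℝ, 0 < δ ∧ ∀ x ∈ s, ∀ y ∈ t, δ < dist x y := by
  obtain ⟨r, hr, hlt⟩ := exists_pos_forall_lt_edist hs ht hst
  refine ⟨r, hr, fun x hx y hy => ?_⟩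
  have := hlt x hx y hy
  rw [edist_nndist, ENNReal.coe_lt_coe] at this
  exact_mod_cast this

theorem IsClosed.not_bddAbove_of_forall_exists_gt {α : Type*} [ConditionallyCompleteLinearOrder α]
    [TopologicalSpace α] [OrderTopology α] {M : Set α} (hcl : IsClosed M) (hne : M.Nonempty)
    (hgt : ∀ x ∈ M, ∃ y ∈ M, x < y) : ¬BddAbove M := by
  intro hbdd
  obtain ⟨y, hy, hlt⟩ := hgt _ (hcl.csSup_mem hne hbdd)
  exact (le_csSup hbdd hy).not_gt hlt

section Semigroup

variable {ι : Type*} (G : ι → ℝ → ℝ)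

theorem comps_monotone (hG : ∀ i, Monotone (G i)) (l : List ι) : Monotone (comps G l) := by
  induction l with
  | nil => exact monotone_id
  | cons i l ih => exact (hG i).comp ih

theorem comps_mapsTo {M : Set ℝ} (hM : ∀ i, MapsTo (G i) M M) (l : List ι) :
    MapsTo (comps G l) M M := by
  induction l with
  | nil => exact mapsTo_id M
  | cons i l ih => exact (hM i).comp ih

theorem monotone_of_mem_sgen (hG : ∀ i, Monotone (G i)) {g : ℝ → ℝ} (hg : g ∈ sgen G) :
    Monotone g := by
  obtain ⟨l, -, rfl⟩ := hg
  exact comps_monotone G hG l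

theorem mapsTo_of_mem_sgen {M : Set ℝ} (hM : ∀ i, MapsTo (G i) M M) {g : ℝ → ℝ}
    (hg : g ∈ sgen G) : MapsTo g M M := by
  obtain ⟨l, -, rfl⟩ := hg
  exact comps_mapsTo G hM l

theorem not_bddAbove_of_invariant (hU : CondU G) {M : Set ℝ} (hcl : IsClosed M)
    (hne : M.Nonempty) (hM : ∀ i, MapsTo (G i) M M) : ¬BddAbove M :=
  hcl.not_bddAbove_of_forall_exists_gt hne fun x hx =>
    let ⟨_, j, _, hj⟩ := hU x
    ⟨G j x, hM j hx, hj⟩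

end Semigroup

theorem exists_le_forall_add_mul_le_of_separated {𝒢 : Set (ℝ → ℝ)} {M₁ M₂ I : Set ℝ} {δ : ℝ}
    (hmono : ∀ g ∈ 𝒢, Monotone g) (hM₁ : ∀ g ∈ 𝒢, MapsTo g M₁ M₁)
    (hM₂ : ∀ g ∈ 𝒢, MapsTo g M₂ M₂) (hM₁bdd : ¬BddAbove M₁) (hM₂bdd : ¬BddAbove M₂)
    (hsep : ∀ u ∈ M₁ ∩ I, ∀ v ∈ M₂ ∩ I, δ < dist u v) (x : ℝ) (n : ℕ) :
    ∃ y, x ≤ y ∧ ∀ g ∈ 𝒢, MapsTo g (Icc x y) I → g x + n * δ ≤ g y := by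
  induction n with
  | zero => exact ⟨x, le_rfl, fun g _ _ => by simp⟩
  | succ n ih =>
    obtain ⟨y, hxy, hy⟩ := ih
    obtain ⟨q, hq, hyq⟩ := not_bddAbove_iff.1 hM₂bdd y
    obtain ⟨p, hp, hqp⟩ := not_bddAbove_iff.1 hM₁bdd q
    refine ⟨p, by linarith, fun g hg hgI => ?_⟩
    have hxy_le := hy g hg (hgI.mono_left (Icc_subset_Icc_right (by linarith)))
    have hyq_le := hmono g hg hyq.le
    have hqp_le := hmono g hg hqp.le
    have hgap := hsep (g p) ⟨hM₁ g hg hp, hgI ⟨by linarith, le_rfl⟩⟩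
      (g q) ⟨hM₂ g hg hq, hgI ⟨by linarith, hqp.le⟩⟩
    rw [Real.dist_eq, abs_of_nonneg (by linarith)] at hgap
    push_cast
    linarith

theorem closed_invariant_sets_intersect_general
    {ι : Type*}
    (G : ι → ℝ → ℝ) (hG : ∀ i, IsOPH (G i))
    (hC : CondC G) (hU : CondU G)
    (M₁ M₂ : Set ℝ)
    (hM₁ne : M₁.Nonempty) (hM₁cl : IsClosed M₁) (hM₁inv : ∀ i, G i '' M₁ ⊆ M₁)
    (hM₂ne : M₂.Nonempty) (hM₂cl : IsClosed M₂) (hM₂inv : ∀ i, G i '' M₂ ⊆ M₂) :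
    (M₁ ∩ M₂).Nonempty := by
  obtain ⟨a, b, hab⟩ := hC
  by_contra hdisj
  have hM₁ (i : ι) : MapsTo (G i) M₁ M₁ := mapsTo_iff_image_subset.2 (hM₁inv i)
  have hM₂ (i : ι) : MapsTo (G i) M₂ M₂ := mapsTo_iff_image_subset.2 (hM₂inv i)
  have hdisjI : Disjoint (M₁ ∩ Icc a b) (M₂ ∩ Icc a b) :=
    (disjoint_iff_inter_eq_empty.2 (not_nonempty_iff_eq_empty.1 hdisj)).mono
      inter_subset_left inter_subset_left
  obtain ⟨δ, hδ, hsep⟩ := Metric.exists_pos_forall_lt_dist (isCompact_Icc.inter_left hM₁cl)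
    (hM₂cl.inter isClosed_Icc) hdisjI
  obtain ⟨n, hn⟩ := exists_nat_gt ((b - a) / δ)
  obtain ⟨y, h0y, hy⟩ := exists_le_forall_add_mul_le_of_separated (𝒢 := sgen G)
    (fun _ => monotone_of_mem_sgen G fun i => (hG i).1.monotone)
    (fun _ => mapsTo_of_mem_sgen G hM₁) (fun _ => mapsTo_of_mem_sgen G hM₂)
    (not_bddAbove_of_invariant G hU hM₁cl hM₁ne hM₁)
    (not_bddAbove_of_invariant G hU hM₂cl hM₂ne hM₂) hsep 0 n
  obtain ⟨g, hg, hgI⟩ := hab (Icc 0 y) isCompact_Icc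
  have hgI' : MapsTo g (Icc 0 y) (Icc a b) := mapsTo_iff_image_subset.2 hgI
  have hstretch := hy g hg hgI'
  have ha := (hgI' (left_mem_Icc.2 h0y)).1
  have hb := (hgI' (right_mem_Icc.2 h0y)).2
  rw [div_lt_iff₀ hδ] at hn
  linarith

/-- **Lemma.** Under conditions (C) and (U), any two nonempty closed `Γ`-invariant
subsets of `ℝ` intersect. -/
theorem closed_invariant_sets_intersect
    {ι : Type*} [Countable ι]
    (G : ι → ℝ → ℝ) (hG : ∀ i, IsOPH (G i))
    (hC : CondC G) (hU : CondU G)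
    (M₁ M₂ : Set ℝ)
    (hM₁ne : M₁.Nonempty) (hM₁cl : IsClosed M₁) (hM₁inv : ∀ i, G i '' M₁ ⊆ M₁)
    (hM₂ne : M₂.Nonempty) (hM₂cl : IsClosed M₂) (hM₂inv : ∀ i, G i '' M₂ ⊆ M₂) :
    (M₁ ∩ M₂).Nonempty :=
  closed_invariant_sets_intersect_general G hG hC hU M₁ M₂ hM₁ne hM₁cl hM₁inv hM₂ne hM₂cl hM₂inv
end

section
/- Suppose there exists g ∈ Γ and constants A⁺, A⁻ ∈ [0,1) and B ≥ 0 such that −A⁻·x⁻ − B ≤ g(x) ≤ A⁺·x⁺ + B for all x ∈ ℝ, where x⁺ = max(x,0) and x⁻ = max(−x,0). Then condition (C) holds: there exists an interval I ⊂ ℝ such that for every compact set K ⊂ ℝ there exists h in the semigroup Γ* generated by Γ with h(K) ⊆ I. -/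
open MeasureTheory Filter Set Function Topology
open scoped ENNReal NNReal

/-!
Put `A = max (A⁺, A⁻, 0) < 1`. The two-sided bound gives `|g x| ≤ A |x| + B`, so the iterates
satisfy `|gⁿ x| ≤ Aⁿ |x| + B / (1 - A)`: the constant `B / (1 - A)` is the fixed point of
`t ↦ A t + B`. On a compact set `K ⊆ [-M, M]` the term `Aⁿ M` eventually drops below `1`, so a
single power `gⁿ ∈ Γ*` maps `K` into `[-(B / (1 - A) + 1), B / (1 - A) + 1]`.
-/

theorem abs_le_of_linear_bounds {a b A B x y : ℝ} (ha : a ≤ A) (hb : b ≤ A) (hA : 0 ≤ A)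
    (hlow : -b * max (-x) 0 - B ≤ y) (hup : y ≤ a * max x 0 + B) : |y| ≤ A * |x| + B := by
  rcases le_total 0 x with hx | hx
  · rw [max_eq_right (neg_nonpos.2 hx), max_eq_left hx, abs_of_nonneg hx] at *
    exact abs_le.2 ⟨by nlinarith, by nlinarith⟩
  · rw [max_eq_left (neg_nonneg.2 hx), max_eq_right hx, abs_of_nonpos hx] at *
    exact abs_le.2 ⟨by nlinarith, by nlinarith⟩

section LinearGrowth

variable {E : Type*} [SeminormedAddCommGroup E] {f : E → E} {A B : ℝ}

theorem norm_iterate_le_of_norm_le (hA0 : 0 ≤ A) (hA1 : A < 1)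
    (hf : ∀ x, ‖f x‖ ≤ A * ‖x‖ + B) (n : ℕ) (x : E) :
    ‖f^[n] x‖ ≤ A ^ n * ‖x‖ + B / (1 - A) := by
  have hB : 0 ≤ B := (norm_nonneg _).trans (by simpa using hf 0)
  have hfixed : A * (B / (1 - A)) + B = B / (1 - A) := by
    field_simp [(sub_pos.2 hA1).ne']
    ring
  induction n with
  | zero => simpa using div_nonneg hB (sub_pos.2 hA1).le
  | succ n ih =>
    calc ‖f^[n + 1] x‖ = ‖f (f^[n] x)‖ := by rw [iterate_succ_apply']
      _ ≤ A * ‖f^[n] x‖ + B := hf _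
      _ ≤ A * (A ^ n * ‖x‖ + B / (1 - A)) + B := by gcongr
      _ = A ^ (n + 1) * ‖x‖ + B / (1 - A) := by linear_combination hfixed

theorem eventually_mapsTo_iterate_closedBall (hA0 : 0 ≤ A) (hA1 : A < 1)
    (hf : ∀ x, ‖f x‖ ≤ A * ‖x‖ + B) {K : Set E} (hK : Bornology.IsBounded K)
    {ε : ℝ} (hε : 0 < ε) :
    ∀ᶠ n in atTop, MapsTo f^[n] K (Metric.closedBall 0 (B / (1 - A) + ε)) := by
  obtain ⟨M, hM⟩ := hK.subset_closedBall 0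
  have hsmall : ∀ᶠ n in atTop, A ^ n * max M 0 ≤ ε := by
    have := (tendsto_pow_atTop_nhds_zero_of_lt_one hA0 hA1).mul_const (max M 0)
    rw [zero_mul] at this
    exact this.eventually (eventually_le_nhds hε)
  filter_upwards [hsmall] with n hn x hx
  have hxM : ‖x‖ ≤ max M 0 := (mem_closedBall_zero_iff.1 (hM hx)).trans (le_max_left _ _)
  rw [mem_closedBall_zero_iff]
  calc ‖f^[n] x‖ ≤ A ^ n * ‖x‖ + B / (1 - A) := norm_iterate_le_of_norm_le hA0 hA1 hf n x
    _ ≤ A ^ n * max M 0 + B / (1 - A) := by gcongr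
    _ ≤ B / (1 - A) + ε := by linarith

end LinearGrowth

theorem comps_replicate {ι : Type*} (G : ι → ℝ → ℝ) (i : ι) (n : ℕ) :
    comps G (List.replicate n i) = (G i)^[n] := by
  induction n with
  | zero => rfl
  | succ n ih => rw [iterate_succ', ← ih]; rfl

theorem iterate_mem_sgen {ι : Type*} (G : ι → ℝ → ℝ) (i : ι) {n : ℕ} (hn : n ≠ 0) :
    (G i)^[n] ∈ sgen G :=
  ⟨List.replicate n i, by simpa using hn, (comps_replicate G i n).symm⟩

theorem condC_of_contracting_linear_bound_general
    {ι : Type*}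
    (G : ι → ℝ → ℝ)
    (i : ι) (Ap Am B : ℝ)
    (hAp1 : Ap < 1) (hAm1 : Am < 1)
    (hbound : ∀ x : ℝ,
      -Am * max (-x) 0 - B ≤ G i x ∧ G i x ≤ Ap * max x 0 + B) :
    CondC G := by
  set A := max (max Ap Am) 0
  have hA0 : 0 ≤ A := le_max_right _ _
  have hA1 : A < 1 := max_lt (max_lt hAp1 hAm1) one_pos
  have hgrowth : ∀ x, ‖G i x‖ ≤ A * ‖x‖ + B := fun x => by
    simpa only [Real.norm_eq_abs] using abs_le_of_linear_bounds
      ((le_max_left _ _).trans (le_max_left _ _)) ((le_max_right _ _).trans (le_max_left _ _))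
      hA0 (hbound x).1 (hbound x).2
  refine ⟨-(B / (1 - A) + 1), B / (1 - A) + 1, fun K hK => ?_⟩
  obtain ⟨n, hmaps, hn⟩ := ((eventually_mapsTo_iterate_closedBall hA0 hA1 hgrowth
    hK.isBounded one_pos).and (eventually_ne_atTop 0)).exists
  refine ⟨_, iterate_mem_sgen G i hn, ?_⟩
  simpa [Real.closedBall_eq_Icc] using hmaps.image_subset

/-- **Lemma.** If some `g ∈ Γ` satisfies a linear bound
`-A⁻ x⁻ - B ≤ g(x) ≤ A⁺ x⁺ + B` with `A⁺, A⁻ ∈ [0,1)` and `B ≥ 0`, then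
condition (C) holds. -/
theorem condC_of_contracting_linear_bound
    {ι : Type*} [Countable ι]
    (G : ι → ℝ → ℝ) (hG : ∀ i, IsOPH (G i))
    (i : ι) (Ap Am B : ℝ)
    (hAp0 : 0 ≤ Ap) (hAp1 : Ap < 1) (hAm0 : 0 ≤ Am) (hAm1 : Am < 1) (hB : 0 ≤ B)
    (hbound : ∀ x : ℝ,
      -Am * max (-x) 0 - B ≤ G i x ∧ G i x ≤ Ap * max x 0 + B) :
    CondC G :=
  condC_of_contracting_linear_bound_general G i Ap Am B hAp1 hAm1 hbound
end

section
/- Suppose that every g ∈ Γ satisfies the linear bound −A⁻(g)·x⁻ − B(g) ≤ g(x) ≤ A⁺(g)·x⁺ + B(g) for all x ∈ ℝ, with constants A⁺(g), A⁻(g) > 0 and B(g) ≥ 0. Assume the functions g ↦ log A⁺(g), g ↦ log A⁻(g) and g ↦ log⁺ B(g) are μ-integrable and Σ_{g∈Γ} μ(g) log A⁺(g) < 0 and Σ_{g∈Γ} μ(g) log A⁻(g) < 0. Then condition (R) holds: there exists a compact interval I ⊂ ℝ such that for every x ∈ ℝ the Markov chain X_n^x visits I infinitely often almost surely. -/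
/-!
Every `g` lies between `y ↦ -(A⁻(g) y⁻ + B(g))` and `y ↦ A⁺(g) y⁺ + B(g)`, so
`|X_n^x| ≤ |x| Π_n + M_n`, where `Π_n` is a product of `n` i.i.d. factors `A^±` and `M_n` is the
forward iteration of the random affine maps `y ↦ A^± y + B` started at `0`. By the strong law,
the negative drifts force `Π_n → 0` a.s. Reversing the first `n` coordinates preserves the
product measure, so `M_n` has the law of the perpetuity `∑_{k<n} A_0 ⋯ A_{k-1} B_k`, which is
nondecreasing in `n` and a.s. bounded (its terms decay geometrically because `log⁺ B` is
integrable). Hence `M_n⁺, M_n⁻ ≤ C` infinitely often with positive probability. With `θ` the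
shift, `M_{m+j} = M_j ∘ θ^m + Π_j(θ^m) M_m` and the last term tends to `0`; so the tail event
"`θ^m ω` lies in that event for infinitely many `m`", which has probability one by Kolmogorov's
zero-one law, forces `M_n⁺, M_n⁻ ≤ C + 1` infinitely often.
-/

open MeasureTheory Filter Set Function Topology
open scoped ENNReal NNReal

section AffineRecursion

open Finset

variable {κ : Type*} (A B : κ → ℝ) (ω : ℕ → κ)

def partialProd (n : ℕ) : ℝ := ∏ k ∈ range n, A (ω k)

def perpetuity (n : ℕ) : ℝ := ∑ k ∈ range n, partialProd A ω k * B (ω k)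

def affineIter : ℕ → ℝ
  | 0 => 0
  | n + 1 => A (ω n) * affineIter n + B (ω n)

lemma partialProd_succ (n : ℕ) : partialProd A ω (n + 1) = partialProd A ω n * A (ω n) :=
  prod_range_succ _ _

lemma partialProd_eq_exp_sum {A : κ → ℝ} (hA : ∀ i, 0 < A i) (n : ℕ) :
    partialProd A ω n = Real.exp (∑ k ∈ range n, Real.log (A (ω k))) := by
  rw [Real.exp_sum]
  exact prod_congr rfl fun k _ => (Real.exp_log (hA _)).symm

lemma perpetuity_succ' (n : ℕ) :
    perpetuity A B ω (n + 1) = A (ω 0) * perpetuity A B (fun k => ω (k + 1)) n + B (ω 0) := by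
  simp only [perpetuity, partialProd, sum_range_succ', prod_range_succ', mul_sum]
  simp only [prod_range_zero, one_mul]
  congr 1
  exact sum_congr rfl fun k _ => by ring

def revPerm (n : ℕ) : Equiv.Perm ℕ :=
  Function.Involutive.toPerm (fun k => if k < n then n - 1 - k else k) fun k => by
    dsimp only
    split_ifs <;> omega

lemma affineIter_eq_perpetuity {n : ℕ} {τ : ℕ → κ} (hτ : ∀ k < n, τ k = ω (n - 1 - k)) :
    affineIter A B ω n = perpetuity A B τ n := by
  induction n generalizing τ with
  | zero => rfl
  | succ n ih =>
    rw [perpetuity_succ', affineIter, hτ 0 (by omega),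
      ← ih fun k hk => (hτ (k + 1) (by omega)).trans (by congr 1; omega)]
    rfl

lemma affineIter_eq_perpetuity_revPerm (n : ℕ) :
    affineIter A B ω n = perpetuity A B (ω ∘ revPerm n) n :=
  affineIter_eq_perpetuity A B ω fun _ hk => congrArg ω (if_pos hk)

lemma partialProd_add (m j : ℕ) :
    partialProd A ω (m + j) = partialProd A ω m * partialProd A (fun k => ω (m + k)) j :=
  prod_range_add (fun k => A (ω k)) m j

lemma affineIter_add (m j : ℕ) :
    affineIter A B ω (m + j) = affineIter A B (fun k => ω (m + k)) j
      + partialProd A (fun k => ω (m + k)) j * affineIter A B ω m := by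
  induction j with
  | zero => simp [affineIter, partialProd]
  | succ j ih =>
    rw [← add_assoc, affineIter, ih, affineIter, partialProd_succ]
    ring

variable {A B}

lemma partialProd_nonneg (hA : ∀ i, 0 ≤ A i) (n : ℕ) : 0 ≤ partialProd A ω n :=
  prod_nonneg fun _ _ => hA _

lemma affineIter_nonneg (hA : ∀ i, 0 ≤ A i) (hB : ∀ i, 0 ≤ B i) (n : ℕ) :
    0 ≤ affineIter A B ω n := by
  induction n with
  | zero => exact le_rfl
  | succ n ih => exact add_nonneg (mul_nonneg (hA _) ih) (hB _)

end AffineRecursion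

section ChainBounds

variable {κ : Type*}

lemma chain_le_affineIter {G : κ → ℝ → ℝ} {A B : κ → ℝ} (hA : ∀ i, 0 ≤ A i) (hB : ∀ i, 0 ≤ B i)
    (hG : ∀ i x, G i x ≤ A i * max x 0 + B i) (ω : ℕ → κ) (x : ℝ) (n : ℕ) :
    chain G ω x n ≤ max x 0 * partialProd A ω n + affineIter A B ω n := by
  induction n with
  | zero => simp [chain, partialProd, affineIter]
  | succ n ih =>
    have hmax : max (chain G ω x n) 0 ≤ max x 0 * partialProd A ω n + affineIter A B ω n :=
      max_le ih (add_nonneg (mul_nonneg (le_max_right _ _) (partialProd_nonneg ω hA n))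
        (affineIter_nonneg ω hA hB n))
    calc chain G ω x (n + 1) ≤ A (ω n) * max (chain G ω x n) 0 + B (ω n) := hG _ _
      _ ≤ A (ω n) * (max x 0 * partialProd A ω n + affineIter A B ω n) + B (ω n) := by
        gcongr; exact hA _
      _ = max x 0 * partialProd A ω (n + 1) + affineIter A B ω (n + 1) := by
        rw [partialProd_succ, affineIter]; ring

lemma chain_conj_neg (G : κ → ℝ → ℝ) (ω : ℕ → κ) (x : ℝ) (n : ℕ) :
    chain (fun i y => -G i (-y)) ω (-x) n = -chain G ω x n := by
  induction n with
  | zero => rfl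
  | succ n ih => simp only [chain, ih, neg_neg]

lemma neg_affineIter_le_chain {G : κ → ℝ → ℝ} {A B : κ → ℝ} (hA : ∀ i, 0 ≤ A i)
    (hB : ∀ i, 0 ≤ B i) (hG : ∀ i x, -A i * max (-x) 0 - B i ≤ G i x) (ω : ℕ → κ) (x : ℝ)
    (n : ℕ) : -(max (-x) 0 * partialProd A ω n + affineIter A B ω n) ≤ chain G ω x n := by
  have := chain_le_affineIter (G := fun i y => -G i (-y)) hA hB
    (fun i y => by have := hG i (-y); rw [neg_neg] at this; linarith) ω (-x) n
  rw [chain_conj_neg] at this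
  linarith

lemma frequently_chain_mem_Icc {G : κ → ℝ → ℝ} {Ap Am B : κ → ℝ} {ω : ℕ → κ} (hAp : ∀ i, 0 < Ap i)
    (hAm : ∀ i, 0 < Am i) (hB : ∀ i, 0 ≤ B i)
    (hbound : ∀ i x, -(Am i) * max (-x) 0 - B i ≤ G i x ∧ G i x ≤ Ap i * max x 0 + B i)
    (hPp : Tendsto (partialProd Ap ω) atTop (𝓝 0)) (hPm : Tendsto (partialProd Am ω) atTop (𝓝 0))
    {C : ℝ} (hfreq : ∃ᶠ n in atTop, affineIter Ap B ω n ≤ C ∧ affineIter Am B ω n ≤ C) (x : ℝ) :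
    ∃ᶠ n in atTop, chain G ω x n ∈ Icc (-(C + 1)) (C + 1) := by
  have hxp := hPp.const_mul (max x 0)
  have hxm := hPm.const_mul (max (-x) 0)
  rw [mul_zero] at hxp hxm
  refine hfreq.mp ?_
  filter_upwards [hxp.eventually (ge_mem_nhds zero_lt_one),
    hxm.eventually (ge_mem_nhds zero_lt_one)] with n hnp hnm hn
  have hup := chain_le_affineIter (fun i => (hAp i).le) hB (fun i y => (hbound i y).2) ω x n
  have hlow := neg_affineIter_le_chain (fun i => (hAm i).le) hB (fun i y => (hbound i y).1) ω x n
  exact ⟨by linarith [hn.2], by linarith [hn.1]⟩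

end ChainBounds

section Asymptotics

open Finset Real

lemma summable_exp_of_tendsto_inv_mul {a : ℕ → ℝ} {c : ℝ} (hc : c < 0)
    (ha : Tendsto (fun n : ℕ => (n : ℝ)⁻¹ * a n) atTop (𝓝 c)) :
    Summable fun n => exp (a n) := by
  refine .of_norm_bounded_eventually_nat (g := fun n => exp (c / 2) ^ n)
    (summable_geometric_of_lt_one (exp_pos _).le (exp_lt_one_iff.mpr (by linarith))) ?_
  filter_upwards [ha.eventually (gt_mem_nhds (by linarith : c < c / 2)), eventually_gt_atTop 0]
    with n hn hpos
  rw [norm_of_nonneg (exp_pos _).le, ← exp_nat_mul, exp_le_exp]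
  rw [inv_mul_lt_iff₀ (by exact_mod_cast hpos)] at hn
  linarith

lemma tendsto_inv_mul_succ {u : ℕ → ℝ} {d : ℝ}
    (hu : Tendsto (fun n : ℕ => (n : ℝ)⁻¹ * u n) atTop (𝓝 d)) :
    Tendsto (fun n : ℕ => (n : ℝ)⁻¹ * u (n + 1)) atTop (𝓝 d) := by
  have hshift := (hu.comp (tendsto_add_atTop_nat 1)).mul
    (tendsto_const_nhds.add tendsto_inv_atTop_nhds_zero_nat : Tendsto
      (fun n : ℕ => 1 + (n : ℝ)⁻¹) atTop (𝓝 (1 + 0)))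
  rw [add_zero, mul_one] at hshift
  refine hshift.congr' ?_
  filter_upwards [eventually_gt_atTop 0] with n hn
  have : (n : ℝ) ≠ 0 := by exact_mod_cast hn.ne'
  simp only [Function.comp_apply, Nat.cast_add, Nat.cast_one]
  field_simp

variable {κ : Type*} {A B : κ → ℝ} {ω : ℕ → κ} {c d : ℝ}

lemma tendsto_partialProd_zero (hA : ∀ i, 0 < A i) (hc : c < 0)
    (hlogA : Tendsto (fun n : ℕ => (n : ℝ)⁻¹ * ∑ k ∈ range n, log (A (ω k))) atTop (𝓝 c)) :
    Tendsto (partialProd A ω) atTop (𝓝 0) := by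
  simpa only [← partialProd_eq_exp_sum ω hA] using
    (summable_exp_of_tendsto_inv_mul hc hlogA).tendsto_atTop_zero

lemma summable_partialProd_mul (hA : ∀ i, 0 < A i) (hB : ∀ i, 0 ≤ B i) (hc : c < 0)
    (hlogA : Tendsto (fun n : ℕ => (n : ℝ)⁻¹ * ∑ k ∈ range n, log (A (ω k))) atTop (𝓝 c))
    (hlogB : Tendsto (fun n : ℕ => (n : ℝ)⁻¹ * ∑ k ∈ range n, max (log (B (ω k))) 0) atTop
      (𝓝 d)) :
    Summable fun n => partialProd A ω n * B (ω n) := by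
  set S := fun n => ∑ k ∈ range n, log (A (ω k))
  set U := fun n => ∑ k ∈ range n, max (log (B (ω k))) 0
  have hsum : Summable fun n => exp (S n + (U (n + 1) - U n)) := by
    refine summable_exp_of_tendsto_inv_mul hc ?_
    have := hlogA.add ((tendsto_inv_mul_succ hlogB).sub hlogB)
    rw [sub_self, add_zero] at this
    exact this.congr fun n => by ring
  refine hsum.of_nonneg_of_le (fun n => mul_nonneg (partialProd_nonneg ω (fun i => (hA i).le) n)
    (hB _)) fun n => ?_
  have hU : U (n + 1) - U n = max (log (B (ω n))) 0 := by
    simp only [U, sum_range_succ, add_sub_cancel_left]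
  rw [hU, exp_add, ← partialProd_eq_exp_sum ω hA]
  exact mul_le_mul_of_nonneg_left ((le_exp_log _).trans (exp_le_exp.mpr (le_max_left _ _)))
    (partialProd_nonneg ω (fun i => (hA i).le) n)

lemma bddAbove_perpetuity (hA : ∀ i, 0 < A i) (hB : ∀ i, 0 ≤ B i) (hc : c < 0)
    (hlogA : Tendsto (fun n : ℕ => (n : ℝ)⁻¹ * ∑ k ∈ range n, log (A (ω k))) atTop (𝓝 c))
    (hlogB : Tendsto (fun n : ℕ => (n : ℝ)⁻¹ * ∑ k ∈ range n, max (log (B (ω k))) 0) atTop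
      (𝓝 d)) :
    BddAbove (Set.range (perpetuity A B ω)) :=
  ⟨_, Set.forall_mem_range.mpr fun _ =>
    (summable_partialProd_mul hA hB hc hlogA hlogB).sum_le_tsum _ fun k _ =>
      mul_nonneg (partialProd_nonneg ω (fun i => (hA i).le) k) (hB _)⟩

lemma tendsto_const_add_atTop_nat (m : ℕ) : Tendsto (fun j => m + j) atTop atTop :=
  tendsto_atTop_mono (fun j => Nat.le_add_left j m) tendsto_id

lemma tendsto_partialProd_shift (hA : ∀ i, 0 < A i) (hP : Tendsto (partialProd A ω) atTop (𝓝 0))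
    (m : ℕ) : Tendsto (partialProd A fun k => ω (m + k)) atTop (𝓝 0) := by
  have hm : partialProd A ω m ≠ 0 := (prod_pos fun k _ => hA (ω k)).ne'
  have := (hP.comp (tendsto_const_add_atTop_nat m)).div_const (partialProd A ω m)
  rw [zero_div] at this
  refine this.congr fun j => ?_
  rw [Function.comp_apply, partialProd_add]
  field_simp

lemma eventually_affineIter_add_le (hA : ∀ i, 0 < A i)
    (hP : Tendsto (partialProd A ω) atTop (𝓝 0)) (m : ℕ) :
    ∀ᶠ j in atTop, affineIter A B ω (m + j) ≤ affineIter A B (fun k => ω (m + k)) j + 1 := by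
  have := (tendsto_partialProd_shift hA hP m).mul_const (affineIter A B ω m)
  rw [zero_mul] at this
  filter_upwards [this.eventually (ge_mem_nhds zero_lt_one)] with j hj
  rw [affineIter_add]
  linarith

lemma frequently_affineIter_le_of_shift {Ap Am : κ → ℝ} (hAp : ∀ i, 0 < Ap i)
    (hAm : ∀ i, 0 < Am i) (hPp : Tendsto (partialProd Ap ω) atTop (𝓝 0))
    (hPm : Tendsto (partialProd Am ω) atTop (𝓝 0)) {m : ℕ} {C : ℝ}
    (hm : ∃ᶠ j in atTop, affineIter Ap B (fun k => ω (m + k)) j ≤ C ∧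
      affineIter Am B (fun k => ω (m + k)) j ≤ C) :
    ∃ᶠ n in atTop, affineIter Ap B ω n ≤ C + 1 ∧ affineIter Am B ω n ≤ C + 1 := by
  refine (tendsto_const_add_atTop_nat m).frequently (hm.mp ?_)
  filter_upwards [eventually_affineIter_add_le (B := B) hAp hPp m,
    eventually_affineIter_add_le (B := B) hAm hPm m] with j hjp hjm hj
  exact ⟨by linarith [hj.1], by linarith [hj.2]⟩

end Asymptotics

section Frequently

variable {α : Type*} {s : ℕ → Set α}

lemma setOf_frequently_eq_iInter_iUnion :
    {x | ∃ᶠ n in atTop, x ∈ s n} = ⋂ m, ⋃ n ≥ m, s n := by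
  ext x
  simp [frequently_atTop]

variable [MeasurableSpace α]

lemma measurableSet_setOf_frequently (hs : ∀ n, MeasurableSet (s n)) :
    MeasurableSet {x | ∃ᶠ n in atTop, x ∈ s n} := by
  rw [setOf_frequently_eq_iInter_iUnion]
  exact .iInter fun m => .biUnion (Set.to_countable _) fun n _ => hs n

lemma le_measure_setOf_frequently {μ : Measure α} [IsFiniteMeasure μ]
    (hs : ∀ n, MeasurableSet (s n)) {p : ℝ≥0∞} (hp : ∀ n, p ≤ μ (s n)) :
    p ≤ μ {x | ∃ᶠ n in atTop, x ∈ s n} := by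
  have hanti : Antitone fun m => ⋃ n ≥ m, s n := fun m m' hm =>
    Set.biUnion_mono (fun n hn => hm.trans hn) fun _ _ => le_rfl
  rw [setOf_frequently_eq_iInter_iUnion, hanti.measure_iInter
    (fun m => (MeasurableSet.biUnion (Set.to_countable _) fun n _ => hs n).nullMeasurableSet)
    ⟨0, measure_ne_top _ _⟩]
  exact le_iInf fun m => (hp m).trans (measure_mono (Set.subset_biUnion_of_mem (le_refl m)))

end Frequently

section Bernoulli

open Finset ProbabilityTheory

variable {κ : Type*} [MeasurableSpace κ] (ν : Measure κ) [IsProbabilityMeasure ν]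

lemma ae_tendsto_inv_mul_sum {f : κ → ℝ} (hf : Measurable f) (hint : Integrable f ν) :
    ∀ᵐ ω ∂Measure.infinitePi (fun _ : ℕ => ν),
      Tendsto (fun n : ℕ => (n : ℝ)⁻¹ * ∑ k ∈ range n, f (ω k)) atTop (𝓝 (∫ i, f i ∂ν)) := by
  have heval := measurePreserving_eval_infinitePi (fun _ : ℕ => ν)
  have hindep := iIndepFun_infinitePi (P := fun _ : ℕ => ν) (X := fun _ => f) fun _ => hf
  have hident (k : ℕ) : IdentDistrib (fun ω : ℕ → κ => f (ω k)) (fun ω => f (ω 0))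
      (Measure.infinitePi fun _ => ν) (Measure.infinitePi fun _ => ν) :=
    ⟨(hf.comp (measurable_pi_apply k)).aemeasurable,
      (hf.comp (measurable_pi_apply 0)).aemeasurable, by
      change Measure.map (f ∘ fun ω : ℕ → κ => ω k) _ = Measure.map (f ∘ fun ω : ℕ → κ => ω 0) _
      rw [← Measure.map_map hf (measurable_pi_apply k),
        ← Measure.map_map hf (measurable_pi_apply 0), (heval k).map_eq, (heval 0).map_eq]⟩
  have hmean : ∫ ω, f (ω 0) ∂Measure.infinitePi (fun _ : ℕ => ν) = ∫ i, f i ∂ν := by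
    rw [← integral_map (measurable_pi_apply 0).aemeasurable hf.aestronglyMeasurable,
      (heval 0).map_eq]
  have := strong_law_ae (fun k (ω : ℕ → κ) => f (ω k))
    ((heval 0).integrable_comp_of_integrable hint) (fun i j hij => hindep.indepFun hij) hident
  simpa only [hmean, smul_eq_mul] using this

/-- The event is shift invariant, hence a tail event, and it is not null because the shifts
preserve the product measure; Kolmogorov's zero-one law does the rest. -/
lemma ae_frequently_shift_mem {E : Set (ℕ → κ)} (hE : MeasurableSet E)
    (hpos : 0 < Measure.infinitePi (fun _ : ℕ => ν) E) :
    ∀ᵐ ω ∂Measure.infinitePi (fun _ : ℕ => ν), ∃ᶠ m in atTop, (fun k => ω (m + k)) ∈ E := by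
  set P := Measure.infinitePi fun _ : ℕ => ν
  set T := {ω : ℕ → κ | ∃ᶠ m in atTop, (fun k => ω (m + k)) ∈ E}
  let σ : ℕ → MeasurableSpace (ℕ → κ) := fun n => MeasurableSpace.comap (fun ω => ω n) ‹_›
  have hshift (m : ℕ) : P.map (fun ω k => ω (m + k)) = P :=
    Measure.map_infinitePi_infinitePi_of_inj (add_right_injective m)
  have hmeas (m : ℕ) : MeasurableSet ((fun ω : ℕ → κ => fun k => ω (m + k)) ⁻¹' E) :=
    hE.preimage (measurable_pi_lambda _ fun k => measurable_pi_apply (m + k))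
  have hT : MeasurableSet T := measurableSet_setOf_frequently hmeas
  have hT_invariant (K : ℕ) : (fun ω : ℕ → κ => fun k => ω (K + k)) ⁻¹' T = T := by
    ext ω
    change (∃ᶠ m in atTop, (fun k => ω (K + (m + k))) ∈ E) ↔
      ∃ᶠ m in atTop, (fun k => ω (m + k)) ∈ E
    conv_rhs => rw [← map_add_atTop_eq_nat K, frequently_map]
    have hK (m k : ℕ) : K + (m + k) = m + K + k := by omega
    simp only [hK]
  have hT_tail : MeasurableSet[limsup σ atTop] T := by
    rw [limsup_eq_iInf_iSup_of_nat, MeasurableSpace.measurableSet_iInf]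
    intro K
    have hshiftK : Measurable[⨆ i ≥ K, σ i] fun ω : ℕ → κ => fun k => ω (K + k) :=
      @measurable_pi_lambda _ _ _ (⨆ i ≥ K, σ i) _ _ fun k => (comap_measurable _).mono
        (le_iSup₂ (f := fun i (_ : i ≥ K) => σ i) (K + k) (Nat.le_add_right K k)) le_rfl
    rw [← hT_invariant K]
    exact hshiftK hT
  have hPT : 0 < P T := hpos.trans_le <| le_measure_setOf_frequently hmeas fun m => by
    rw [← Measure.map_apply (measurable_pi_lambda _ fun k => measurable_pi_apply (m + k)) hE,
      hshift m]
  have h01 := measure_zero_or_one_of_measurableSet_limsup_atTop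
    (fun n => (measurable_pi_apply n).comap_le)
    (iIndepFun_infinitePi (P := fun _ : ℕ => ν) (X := fun _ => id) fun _ => measurable_id).iIndep
    hT_tail
  exact (prob_compl_eq_zero_iff hT).mpr (h01.resolve_left hPT.ne')

end Bernoulli

section ProductMeasure

open Finset

variable {ι : Type*} [Countable ι] [MeasurableSpace ι] [MeasurableSingletonClass ι]

lemma IsProd.eq_infinitePi {μm : Measure ι} [IsProbabilityMeasure μm] {Q : Measure (ℕ → ι)}
    (hQ : IsProd μm Q) : Q = Measure.infinitePi fun _ => μm := by
  have : Nonempty ι := nonempty_of_isProbabilityMeasure μm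
  set P := Measure.infinitePi fun _ : ℕ => μm
  let R (n : ℕ) : (ℕ → ι) → Fin n → ι := fun ω k => ω k
  have hR (n : ℕ) : Measurable (R n) := measurable_pi_lambda _ fun k => measurable_pi_apply _
  have hmarg (n : ℕ) : Q.map (R n) = P.map (R n) := by
    refine Measure.ext_of_singleton fun d => ?_
    let c : ℕ → ι := fun k => if h : k < n then d ⟨k, h⟩ else Classical.arbitrary ι
    have hcyl : R n ⁻¹' {d} = {ω | ∀ k < n, ω k = c k} := by
      ext ω
      simp only [Set.mem_preimage, Set.mem_singleton_iff, R, funext_iff, Fin.forall_iff]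
      exact forall₂_congr fun k hk => by simp only [c, dif_pos hk]
    have hbox : {ω : ℕ → ι | ∀ k < n, ω k = c k} =
        Set.pi (Finset.range n : Set ℕ) fun k => {c k} := by
      ext ω
      simp
    rw [Measure.map_apply (hR n) (measurableSet_singleton d),
      Measure.map_apply (hR n) (measurableSet_singleton d), hcyl, hQ, hbox,
      Measure.infinitePi_pi _ fun _ _ => measurableSet_singleton _]
  refine Measure.eq_infinitePi _ fun s t _ => ?_
  obtain ⟨n, hn⟩ := s.exists_nat_subset_range
  have hbox : Set.pi s t = R n ⁻¹' {d | ∀ k : Fin n, (k : ℕ) ∈ s → d k ∈ t k} := by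
    ext ω
    simp only [Set.mem_pi, Set.mem_preimage, R, Fin.forall_iff, Finset.mem_coe]
    exact ⟨fun h k _ hk => h k hk, fun h k hk => h k (mem_range.mp (hn hk)) hk⟩
  rw [hbox, ← Measure.map_apply (hR n) .of_discrete, hmarg,
    Measure.map_apply (hR n) .of_discrete, ← hbox, Measure.infinitePi_pi _ fun _ _ => .of_discrete]

end ProductMeasure

section Recurrence

open Finset Real

variable {κ : Type*} [MeasurableSpace κ] {ν : Measure κ} {A Ap Am B : κ → ℝ}

lemma measurable_affineIter (hA : Measurable A) (hB : Measurable B) (n : ℕ) :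
    Measurable fun ω : ℕ → κ => affineIter A B ω n := by
  induction n with
  | zero => exact measurable_const
  | succ n ih =>
    exact ((hA.comp (measurable_pi_apply n)).mul ih).add (hB.comp (measurable_pi_apply n))

lemma measurable_perpetuity (hA : Measurable A) (hB : Measurable B) (n : ℕ) :
    Measurable fun ω : ℕ → κ => perpetuity A B ω n :=
  Finset.measurable_sum _ fun k _ => (Finset.measurable_prod _ fun j _ =>
    hA.comp (measurable_pi_apply j)).mul (hB.comp (measurable_pi_apply k))

structure NegativeDrift (ν : Measure κ) (A B : κ → ℝ) : Prop where
  measurable_A : Measurable A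
  measurable_B : Measurable B
  pos : ∀ i, 0 < A i
  nonneg : ∀ i, 0 ≤ B i
  integrable_log : Integrable (fun i => log (A i)) ν
  integrable_logPlus : Integrable (fun i => max (log (B i)) 0) ν
  drift_neg : ∫ i, log (A i) ∂ν < 0

lemma NegativeDrift.ae_tendsto_partialProd_zero [IsProbabilityMeasure ν]
    (h : NegativeDrift ν A B) :
    ∀ᵐ ω ∂Measure.infinitePi (fun _ : ℕ => ν), Tendsto (partialProd A ω) atTop (𝓝 0) := by
  filter_upwards [ae_tendsto_inv_mul_sum ν h.measurable_A.log h.integrable_log] with ω hlogA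
  exact tendsto_partialProd_zero h.pos h.drift_neg hlogA

lemma NegativeDrift.ae_bddAbove_perpetuity [IsProbabilityMeasure ν]
    (h : NegativeDrift ν A B) :
    ∀ᵐ ω ∂Measure.infinitePi (fun _ : ℕ => ν), BddAbove (Set.range (perpetuity A B ω)) := by
  filter_upwards [ae_tendsto_inv_mul_sum ν h.measurable_A.log h.integrable_log,
    ae_tendsto_inv_mul_sum ν (h.measurable_B.log.max measurable_const) h.integrable_logPlus]
    with ω hlogA hlogB
  exact bddAbove_perpetuity h.pos h.nonneg h.drift_neg hlogA hlogB

lemma measurableSet_setOf_le_and_le {α : Type*} [MeasurableSpace α] {f g : α → ℝ}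
    (hf : Measurable f) (hg : Measurable g) (C : ℝ) : MeasurableSet {x | f x ≤ C ∧ g x ≤ C} :=
  (measurableSet_le hf measurable_const).inter (measurableSet_le hg measurable_const)

lemma NegativeDrift.measurableSet_affineIter_le (hp : NegativeDrift ν Ap B)
    (hm : NegativeDrift ν Am B) (C : ℝ) (n : ℕ) :
    MeasurableSet {ω : ℕ → κ | affineIter Ap B ω n ≤ C ∧ affineIter Am B ω n ≤ C} :=
  measurableSet_setOf_le_and_le (measurable_affineIter hp.measurable_A hp.measurable_B n)
    (measurable_affineIter hm.measurable_A hm.measurable_B n) C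

/-- At each time `n` the forward iteration has the law of the perpetuity, which is monotone
in `n` and a.s. bounded. -/
lemma exists_pos_measure_frequently_affineIter_le [IsProbabilityMeasure ν]
    (hp : NegativeDrift ν Ap B) (hm : NegativeDrift ν Am B) :
    ∃ C : ℝ, 0 ≤ C ∧ 0 < Measure.infinitePi (fun _ : ℕ => ν)
      {ω | ∃ᶠ n in atTop, affineIter Ap B ω n ≤ C ∧ affineIter Am B ω n ≤ C} := by
  set P := Measure.infinitePi fun _ : ℕ => ν
  let F (C : ℕ) : Set (ℕ → κ) := {ω | ∀ n, perpetuity Ap B ω n ≤ C ∧ perpetuity Am B ω n ≤ C}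
  obtain ⟨C, hC⟩ : ∃ C, 0 < P (F C) := by
    have hcover : ∀ᵐ ω ∂P, ω ∈ ⋃ C, F C := by
      filter_upwards [hp.ae_bddAbove_perpetuity, hm.ae_bddAbove_perpetuity]
        with ω ⟨a, ha⟩ ⟨b, hb⟩
      refine Set.mem_iUnion.mpr ⟨⌈max a b⌉₊, fun n => ⟨?_, ?_⟩⟩
      · exact (ha (Set.mem_range_self n)).trans ((le_max_left a b).trans (Nat.le_ceil _))
      · exact (hb (Set.mem_range_self n)).trans ((le_max_right a b).trans (Nat.le_ceil _))
    by_contra! h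
    have hnull := measure_eq_zero_iff_ae_notMem.mp
      (measure_iUnion_null fun C => nonpos_iff_eq_zero.mp (h C))
    obtain ⟨ω, hmem, hnmem⟩ := (hcover.and hnull).exists
    exact hnmem hmem
  refine ⟨C, C.cast_nonneg, hC.trans_le <| le_measure_setOf_frequently
    (hp.measurableSet_affineIter_le hm C) fun n => ?_⟩
  have hrev : Measurable fun (ω : ℕ → κ) k => ω (revPerm n k) :=
    measurable_pi_lambda _ fun k => measurable_pi_apply _
  have hpreimage : {ω : ℕ → κ | affineIter Ap B ω n ≤ C ∧ affineIter Am B ω n ≤ C} =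
      (fun ω k => ω (revPerm n k)) ⁻¹'
        {ω | perpetuity Ap B ω n ≤ C ∧ perpetuity Am B ω n ≤ C} := by
    ext ω
    simp only [Set.mem_preimage, Set.mem_ofPred_eq, affineIter_eq_perpetuity_revPerm]
    rfl
  rw [hpreimage, ← Measure.map_apply hrev (measurableSet_setOf_le_and_le
    (measurable_perpetuity hp.measurable_A hp.measurable_B n)
    (measurable_perpetuity hm.measurable_A hm.measurable_B n) _),
    Measure.map_infinitePi_infinitePi_of_inj (revPerm n).injective]
  exact measure_mono fun ω hω => hω n

lemma ae_frequently_affineIter_le [IsProbabilityMeasure ν] (hp : NegativeDrift ν Ap B)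
    (hm : NegativeDrift ν Am B) :
    ∃ C : ℝ, 0 ≤ C ∧ ∀ᵐ ω ∂Measure.infinitePi (fun _ : ℕ => ν),
      ∃ᶠ n in atTop, affineIter Ap B ω n ≤ C ∧ affineIter Am B ω n ≤ C := by
  obtain ⟨C, hC0, hC⟩ := exists_pos_measure_frequently_affineIter_le hp hm
  refine ⟨C + 1, by linarith, ?_⟩
  filter_upwards [ae_frequently_shift_mem ν (measurableSet_setOf_frequently
      (hp.measurableSet_affineIter_le hm C)) hC,
    hp.ae_tendsto_partialProd_zero, hm.ae_tendsto_partialProd_zero] with ω hshift hPp hPm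
  obtain ⟨m, hω_m⟩ := hshift.exists
  exact frequently_affineIter_le_of_shift hp.pos hm.pos hPp hPm hω_m

end Recurrence

theorem condR_of_negative_drift_general
    {ι : Type*} [Countable ι] [MeasurableSpace ι] [MeasurableSingletonClass ι]
    (G : ι → ℝ → ℝ)
    (μm : Measure ι) [IsProbabilityMeasure μm]
    (Q : Measure (ℕ → ι)) (hQ : IsProd μm Q)
    (Ap Am B : ι → ℝ)
    (hAp : ∀ i, 0 < Ap i) (hAm : ∀ i, 0 < Am i) (hB : ∀ i, 0 ≤ B i)
    (hbound : ∀ i, ∀ x : ℝ,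
      -(Am i) * max (-x) 0 - B i ≤ G i x ∧ G i x ≤ Ap i * max x 0 + B i)
    (hiAp : Integrable (fun i => Real.log (Ap i)) μm)
    (hiAm : Integrable (fun i => Real.log (Am i)) μm)
    (hiB : Integrable (fun i => max (Real.log (B i)) 0) μm)
    (hdriftp : ∫ i, Real.log (Ap i) ∂μm < 0)
    (hdriftm : ∫ i, Real.log (Am i) ∂μm < 0) :
    CondR G Q := by
  obtain rfl := hQ.eq_infinitePi
  have hp : NegativeDrift μm Ap B := ⟨measurable_of_countable _, measurable_of_countable _, hAp,
    hB, hiAp, hiB, hdriftp⟩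
  have hm : NegativeDrift μm Am B := ⟨measurable_of_countable _, measurable_of_countable _, hAm,
    hB, hiAm, hiB, hdriftm⟩
  obtain ⟨C, hC0, hC⟩ := ae_frequently_affineIter_le hp hm
  refine ⟨-(C + 1), C + 1, by linarith, fun x => ?_⟩
  filter_upwards [hC, hp.ae_tendsto_partialProd_zero, hm.ae_tendsto_partialProd_zero]
    with ω hfreq hPp hPm
  exact frequently_chain_mem_Icc hAp hAm hB hbound hPp hPm hfreq x

/-- **Lemma.** If every `g ∈ Γ` satisfies a linear bound
`-A⁻(g) x⁻ - B(g) ≤ g(x) ≤ A⁺(g) x⁺ + B(g)` with `A⁺(g), A⁻(g) > 0`, `B(g) ≥ 0`,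
the functions `log A⁺`, `log A⁻` and `log⁺ B` are `μ`-integrable, and both drifts
`Σ_g μ(g) log A⁺(g)` and `Σ_g μ(g) log A⁻(g)` are negative, then condition (R)
holds. -/
theorem condR_of_negative_drift
    {ι : Type*} [Countable ι] [MeasurableSpace ι] [MeasurableSingletonClass ι]
    (G : ι → ℝ → ℝ) (hG : ∀ i, IsOPH (G i))
    (μm : Measure ι) [IsProbabilityMeasure μm] (hpos : ∀ i, 0 < μm {i})
    (Q : Measure (ℕ → ι)) (hQ : IsProd μm Q)
    (Ap Am B : ι → ℝ)
    (hAp : ∀ i, 0 < Ap i) (hAm : ∀ i, 0 < Am i) (hB : ∀ i, 0 ≤ B i)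
    (hbound : ∀ i, ∀ x : ℝ,
      -(Am i) * max (-x) 0 - B i ≤ G i x ∧ G i x ≤ Ap i * max x 0 + B i)
    (hiAp : Integrable (fun i => Real.log (Ap i)) μm)
    (hiAm : Integrable (fun i => Real.log (Am i)) μm)
    (hiB : Integrable (fun i => max (Real.log (B i)) 0) μm)
    (hdriftp : ∫ i, Real.log (Ap i) ∂μm < 0)
    (hdriftm : ∫ i, Real.log (Am i) ∂μm < 0) :
    CondR G Q :=
  condR_of_negative_drift_general G μm Q hQ Ap Am B hAp hAm hB hbound hiAp hiAm hiB hdriftp hdriftm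
end

section
/- Let r: (0,1) → ℝ be the increasing diffeomorphism r(u) = −1/u + 1/(1−u), and let h be an increasing C² diffeomorphism of [0,1] (so h(0) = 0, h(1) = 1, h' > 0 on [0,1]). Define h_r = r∘h∘r⁻¹, an orientation-preserving homeomorphism of ℝ. Then limsup_{x→+∞} h_r(x)/x = 1/h'(1), limsup_{x→−∞} h_r(x)/x = 1/h'(0), limsup_{x→+∞} [h_r(x) − x/h'(1)] < ∞, and liminf_{x→−∞} [h_r(x) − x/h'(0)] > −∞. In particular h_r satisfies the linear bound −A⁻·x⁻ − B ≤ h_r(x) ≤ A⁺·x⁺ + B for all x ∈ ℝ, for some B ≥ 0 and with A⁺ = 1/h'(1), A⁻ = 1/h'(0). -/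
open Filter Set Function Topology

/-- The diffeomorphism `r : (0,1) → ℝ`, `r(u) = -1/u + 1/(1-u)`. -/
noncomputable def rHomeo (u : ℝ) : ℝ := -1 / u + 1 / (1 - u)

/-!
Since `r(1 - u) = -r(u)` and `r(u) = -1/u + O(1)` near `0`, everything reduces to the behaviour
of `h` at the endpoints: by Taylor's formula with a Lipschitz derivative,
`h(v) = h'(0) v + O(v²)`, and `h(v) ≥ m v` with `m = min h' > 0`. Hence
`-1/h(v) = -1/(h'(0) v) + O(1)`, i.e. `h_r(x) = x / h'(0) + O(1)` as `x → -∞`, and symmetrically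
at `+∞`. A bounded error term then gives the limits of `h_r(x)/x` and the linear bounds.
-/

theorem abs_sub_sub_mul_le_of_lipschitzOnWith_deriv {f f' : ℝ → ℝ} {s : Set ℝ} {K : NNReal}
    (hs : Convex ℝ s) (hf : ∀ z ∈ s, HasDerivWithinAt f (f' z) s z)
    (hf' : LipschitzOnWith K f' s) ⦃x y : ℝ⦄ (hx : x ∈ s) (hy : y ∈ s) :
    |f y - f x - f' x * (y - x)| ≤ K * (y - x) ^ 2 := by
  set t := s ∩ uIcc x y
  have hg : ∀ z ∈ t, HasDerivWithinAt (fun z => f z - f' x * z) (f' z - f' x) t z := fun z hz => by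
    simpa using ((hf z hz.1).mono inter_subset_left).fun_sub
      ((hasDerivWithinAt_id z t).const_mul (f' x))
  have hbound : ∀ z ∈ t, ‖f' z - f' x‖ ≤ K * |y - x| := fun z hz =>
    calc ‖f' z - f' x‖ ≤ K * |z - x| := by
          simpa [Real.dist_eq] using hf'.dist_le_mul z hz.1 x hx
      _ ≤ K * |y - x| := by gcongr ?_ * ?_; exact abs_sub_left_of_mem_uIcc hz.2
  calc |f y - f x - f' x * (y - x)| = ‖f y - f' x * y - (f x - f' x * x)‖ := by
        rw [Real.norm_eq_abs]; ring_nf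
    _ ≤ K * |y - x| * ‖y - x‖ :=
        (hs.inter (convex_uIcc x y)).norm_image_sub_le_of_norm_hasDerivWithin_le hg hbound
          ⟨hx, left_mem_uIcc⟩ ⟨hy, right_mem_uIcc⟩
    _ = K * (y - x) ^ 2 := by rw [Real.norm_eq_abs, mul_assoc, ← sq, sq_abs]

theorem tendsto_div_of_abs_sub_mul_le {l : Filter ℝ} (hl : Tendsto abs l atTop) {g : ℝ → ℝ}
    {c C : ℝ} (hg : ∀ᶠ x in l, |g x - c * x| ≤ C) : Tendsto (fun x => g x / x) l (𝓝 c) := by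
  have herr : Tendsto (fun x => (g x - c * x) / x) l (𝓝 0) := by
    refine squeeze_zero_norm' (a := fun x => C / |x|) ?_ (tendsto_const_nhds.div_atTop hl)
    filter_upwards [hg, hl.eventually_gt_atTop 0] with x hgx hx
    rw [Real.norm_eq_abs, abs_div]
    gcongr
  have hlim := herr.const_add c
  rw [add_zero] at hlim
  refine hlim.congr' ?_
  filter_upwards [hl.eventually_gt_atTop 0] with x hx
  have : x ≠ 0 := abs_pos.1 hx
  field_simp
  ring

theorem two_sided_linear_bound_of_abs_sub_mul_le {g : ℝ → ℝ} {a b C : ℝ} (ha : 0 ≤ a)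
    (hb : 0 ≤ b) (hpos : ∀ x, 0 ≤ x → |g x - a * x| ≤ C) (hneg : ∀ x ≤ 0, |g x - b * x| ≤ C)
    (x : ℝ) : -b * max (-x) 0 - C ≤ g x ∧ g x ≤ a * max x 0 + C := by
  rcases le_total 0 x with hx | hx
  · have := abs_le.1 (hpos x hx)
    rw [max_eq_left hx, max_eq_right (neg_nonpos.2 hx)]
    constructor <;> nlinarith [mul_nonneg ha hx]
  · have := abs_le.1 (hneg x hx)
    rw [max_eq_right hx, max_eq_left (neg_nonneg.2 hx)]
    constructor <;> nlinarith [mul_nonneg hb (neg_nonneg.2 hx)]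

theorem rHomeo_one_sub (u : ℝ) : rHomeo (1 - u) = -rHomeo u := by
  simp only [rHomeo]
  ring

theorem rHomeo_neg_of_lt_half {v : ℝ} (hv : 0 < v) (hv2 : v < 1 / 2) : rHomeo v < 0 := by
  have h1v : 0 < 1 - v := by linarith
  rw [rHomeo, div_add_div _ _ hv.ne' h1v.ne', div_neg_iff]
  right
  constructor <;> nlinarith

theorem abs_rHomeo_sub_div_le {v w b m K : ℝ} (hv : 0 < v) (hv2 : v ≤ 1 / 2) (hm : 0 < m)
    (hb : 0 < b) (hw0 : m * v ≤ w) (hw1 : m * (1 - v) ≤ 1 - w) (hwb : |w - b * v| ≤ K * v ^ 2) :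
    |rHomeo w - rHomeo v / b| ≤ K / (m * b) + 2 / m + 2 / b := by
  have hw : 0 < w := lt_of_lt_of_le (by positivity) hw0
  have h1w : m / 2 ≤ 1 - w := by nlinarith
  have hsplit : rHomeo w - rHomeo v / b =
      (w - b * v) / (b * v * w) + (1 / (1 - w) - 1 / (b * (1 - v))) := by
    simp only [rHomeo]
    field_simp
    ring
  have hnear : |(w - b * v) / (b * v * w)| ≤ K / (m * b) := by
    have hK : 0 ≤ K := (mul_nonneg_iff_of_pos_right (by positivity)).1 ((abs_nonneg _).trans hwb)
    rw [abs_div, abs_of_pos (by positivity : 0 < b * v * w),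
      div_le_div_iff₀ (by positivity) (by positivity)]
    calc |w - b * v| * (m * b) ≤ K * v ^ 2 * (m * b) := by gcongr
      _ = K * (b * v * (m * v)) := by ring
      _ ≤ K * (b * v * w) := by gcongr
  have hfar : |1 / (1 - w) - 1 / (b * (1 - v))| ≤ 2 / m + 2 / b := by
    have e1 : 1 / (1 - w) ≤ 2 / m := by
      rw [div_le_div_iff₀ (by linarith) hm]
      linarith
    have e2 : 1 / (b * (1 - v)) ≤ 2 / b := by
      rw [div_le_div_iff₀ (by nlinarith) hb]
      nlinarith
    have e3 : 0 < 1 / (1 - w) := one_div_pos.2 (by linarith)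
    have e4 : 0 < 1 / (b * (1 - v)) := one_div_pos.2 (by nlinarith)
    rw [abs_le]
    constructor <;> linarith
  rw [hsplit]
  exact (abs_add_le _ _).trans (by linarith)

theorem abs_rHomeo_sub_div_le_of_half_le {v w a m K : ℝ} (hv2 : 1 / 2 ≤ v) (hv : v < 1)
    (hm : 0 < m) (ha : 0 < a) (hw0 : m * v ≤ w) (hw1 : m * (1 - v) ≤ 1 - w)
    (hwa : |1 - w - a * (1 - v)| ≤ K * (1 - v) ^ 2) :
    |rHomeo w - rHomeo v / a| ≤ K / (m * a) + 2 / m + 2 / a := by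
  have := abs_rHomeo_sub_div_le (v := 1 - v) (w := 1 - w) (by linarith) (by linarith) hm ha hw1
    (by simpa using hw0) hwa
  rwa [rHomeo_one_sub, rHomeo_one_sub, neg_div, neg_sub_neg, abs_sub_comm] at this

theorem exists_endpoint_bounds {h : ℝ → ℝ} (hC2 : ContDiffOn ℝ 2 h (Icc 0 1)) (h0 : h 0 = 0)
    (h1 : h 1 = 1) (hderiv : ∀ u ∈ Icc (0:ℝ) 1, 0 < derivWithin h (Icc 0 1) u) :
    ∃ m > 0, ∃ K : ℝ, ∀ v ∈ Icc (0:ℝ) 1,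
      m * v ≤ h v ∧ m * (1 - v) ≤ 1 - h v ∧
      |h v - derivWithin h (Icc 0 1) 0 * v| ≤ K * v ^ 2 ∧
      |1 - h v - derivWithin h (Icc 0 1) 1 * (1 - v)| ≤ K * (1 - v) ^ 2 := by
  set h' := derivWithin h (Icc 0 1)
  have hdiff : DifferentiableOn ℝ h (Icc 0 1) := hC2.differentiableOn (by norm_num)
  have hC1 : ContDiffOn ℝ 1 h' (Icc 0 1) :=
    hC2.derivWithin (uniqueDiffOn_Icc zero_lt_one) (by norm_num)
  obtain ⟨u₀, hu₀, hmin⟩ :=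
    isCompact_Icc.exists_isMinOn (nonempty_Icc.2 zero_le_one) hC1.continuousOn
  obtain ⟨K, hK⟩ := hC1.exists_lipschitzOnWith one_ne_zero (convex_Icc 0 1) isCompact_Icc
  have hgrowth := (convex_Icc (0:ℝ) 1).mul_sub_le_image_sub_of_le_deriv hC2.continuousOn
    (hdiff.mono interior_subset) (C := h' u₀) fun x hx => by
      rw [interior_Icc] at hx
      rw [← derivWithin_of_mem_nhds (Icc_mem_nhds hx.1 hx.2)]
      exact hmin (Ioo_subset_Icc_self hx)
  have htaylor := abs_sub_sub_mul_le_of_lipschitzOnWith_deriv (convex_Icc (0:ℝ) 1)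
    (fun z hz => (hdiff z hz).hasDerivWithinAt) hK
  have hI0 : (0:ℝ) ∈ Icc 0 1 := left_mem_Icc.2 zero_le_one
  have hI1 : (1:ℝ) ∈ Icc 0 1 := right_mem_Icc.2 zero_le_one
  refine ⟨h' u₀, hderiv u₀ hu₀, K, fun v hv => ⟨?_, ?_, ?_, ?_⟩⟩
  · simpa [h0] using hgrowth 0 hI0 v hv hv.1
  · simpa [h1] using hgrowth v hv 1 hI1 hv.2
  · simpa [h0] using htaylor hI0 hv
  · have := htaylor hI1 hv
    rw [h1, ← abs_neg] at this
    convert this using 2 <;> ring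

theorem exists_abs_rHomeo_conj_sub_le {h : ℝ → ℝ} (hC2 : ContDiffOn ℝ 2 h (Icc 0 1))
    (h0 : h 0 = 0) (h1 : h 1 = 1)
    (hderiv : ∀ u ∈ Icc (0:ℝ) 1, 0 < derivWithin h (Icc 0 1) u) (rinv : ℝ → ℝ)
    (hrinv_mem : ∀ x : ℝ, rinv x ∈ Ioo (0:ℝ) 1) (hrinv_right : ∀ x : ℝ, rHomeo (rinv x) = x) :
    ∃ C, 0 ≤ C ∧
      (∀ x, 0 ≤ x → |rHomeo (h (rinv x)) - 1 / derivWithin h (Icc 0 1) 1 * x| ≤ C) ∧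
      (∀ x ≤ 0, |rHomeo (h (rinv x)) - 1 / derivWithin h (Icc 0 1) 0 * x| ≤ C) := by
  obtain ⟨m, hm, K, hbound⟩ := exists_endpoint_bounds hC2 h0 h1 hderiv
  have ha := hderiv 1 (right_mem_Icc.2 zero_le_one)
  have hb := hderiv 0 (left_mem_Icc.2 zero_le_one)
  set a := derivWithin h (Icc 0 1) 1
  set b := derivWithin h (Icc 0 1) 0
  have hpos : ∀ x, 0 ≤ x → |rHomeo (h (rinv x)) - 1 / a * x| ≤ K / (m * a) + 2 / m + 2 / a := by
    intro x hx
    obtain ⟨hv0, hv1⟩ := hrinv_mem x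
    have hv2 : 1 / 2 ≤ rinv x := not_lt.1 fun hlt =>
      (rHomeo_neg_of_lt_half hv0 hlt).not_ge (by rwa [hrinv_right])
    obtain ⟨hw0, hw1, -, hwa⟩ := hbound _ ⟨hv0.le, hv1.le⟩
    simpa only [hrinv_right, one_div_mul_eq_div] using
      abs_rHomeo_sub_div_le_of_half_le hv2 hv1 hm ha hw0 hw1 hwa
  have hneg : ∀ x ≤ 0, |rHomeo (h (rinv x)) - 1 / b * x| ≤ K / (m * b) + 2 / m + 2 / b := by
    intro x hx
    obtain ⟨hv0, hv1⟩ := hrinv_mem x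
    have hv2 : rinv x ≤ 1 / 2 := not_lt.1 fun hlt => by
      have := rHomeo_neg_of_lt_half (v := 1 - rinv x) (by linarith) (by linarith)
      rw [rHomeo_one_sub, hrinv_right] at this
      linarith
    obtain ⟨hw0, hw1, hwb, -⟩ := hbound _ ⟨hv0.le, hv1.le⟩
    simpa only [hrinv_right, one_div_mul_eq_div] using
      abs_rHomeo_sub_div_le hv0 hv2 hm hb hw0 hw1 hwb
  exact ⟨_, (abs_nonneg _).trans ((hpos 0 le_rfl).trans (le_max_left _ _)),
    fun x hx => (hpos x hx).trans (le_max_left _ _),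
    fun x hx => (hneg x hx).trans (le_max_right _ _)⟩

theorem conjugated_diffeo_asymptotically_linear_general
    (h : ℝ → ℝ)
    (hC2 : ContDiffOn ℝ 2 h (Icc 0 1))
    (h0 : h 0 = 0) (h1 : h 1 = 1)
    (hderiv : ∀ u ∈ Icc (0:ℝ) 1, 0 < derivWithin h (Icc 0 1) u)
    -- `rinv : ℝ → (0,1)` is the inverse of `r`
    (rinv : ℝ → ℝ)
    (hrinv_mem : ∀ x : ℝ, rinv x ∈ Ioo (0:ℝ) 1)
    (hrinv_right : ∀ x : ℝ, rHomeo (rinv x) = x) :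
    Filter.limsup (fun x : ℝ => rHomeo (h (rinv x)) / x) atTop
        = 1 / derivWithin h (Icc 0 1) 1 ∧
    Filter.limsup (fun x : ℝ => rHomeo (h (rinv x)) / x) atBot
        = 1 / derivWithin h (Icc 0 1) 0 ∧
    Filter.IsBoundedUnder (· ≤ ·) atTop
        (fun x : ℝ => rHomeo (h (rinv x)) - x / derivWithin h (Icc 0 1) 1) ∧
    Filter.IsBoundedUnder (· ≥ ·) atBot
        (fun x : ℝ => rHomeo (h (rinv x)) - x / derivWithin h (Icc 0 1) 0) ∧
    ∃ B : ℝ, 0 ≤ B ∧ ∀ x : ℝ,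
      -(1 / derivWithin h (Icc 0 1) 0) * max (-x) 0 - B ≤ rHomeo (h (rinv x)) ∧
      rHomeo (h (rinv x)) ≤ (1 / derivWithin h (Icc 0 1) 1) * max x 0 + B := by
  obtain ⟨C, hC, hpos, hneg⟩ :=
    exists_abs_rHomeo_conj_sub_le hC2 h0 h1 hderiv rinv hrinv_mem hrinv_right
  have ha := hderiv 1 (right_mem_Icc.2 zero_le_one)
  have hb := hderiv 0 (left_mem_Icc.2 zero_le_one)
  refine ⟨(tendsto_div_of_abs_sub_mul_le tendsto_abs_atTop_atTop
      ((eventually_ge_atTop 0).mono hpos)).limsup_eq,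
    (tendsto_div_of_abs_sub_mul_le tendsto_abs_atBot_atTop
      ((eventually_le_atBot 0).mono hneg)).limsup_eq, ?_, ?_,
    C, hC, two_sided_linear_bound_of_abs_sub_mul_le (by positivity) (by positivity) hpos hneg⟩
  · refine isBoundedUnder_of_eventually_le (a := C) ((eventually_ge_atTop 0).mono fun x hx => ?_)
    simpa only [one_div_mul_eq_div] using (abs_le.1 (hpos x hx)).2
  · refine isBoundedUnder_of_eventually_ge (a := -C) ((eventually_le_atBot 0).mono fun x hx => ?_)
    simpa only [one_div_mul_eq_div] using (abs_le.1 (hneg x hx)).1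

/-- **Lemma.** For any increasing `C²` diffeomorphism `h` of `[0,1]`, the conjugated
homeomorphism `h_r = r ∘ h ∘ r⁻¹` of `ℝ` satisfies
`limsup_{x→+∞} h_r(x)/x = 1/h'(1)`, `limsup_{x→-∞} h_r(x)/x = 1/h'(0)`,
`limsup_{x→+∞} [h_r(x) - x/h'(1)] < ∞`, `liminf_{x→-∞} [h_r(x) - x/h'(0)] > -∞`;
in particular `h_r` satisfies the linear bound
`-(1/h'(0))·x⁻ - B ≤ h_r(x) ≤ (1/h'(1))·x⁺ + B` for some `B ≥ 0`. -/
theorem conjugated_diffeo_asymptotically_linear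
    (h : ℝ → ℝ)
    (hC2 : ContDiffOn ℝ 2 h (Icc 0 1))
    (h0 : h 0 = 0) (h1 : h 1 = 1)
    (hmono : StrictMonoOn h (Icc 0 1))
    (hsurj : SurjOn h (Icc 0 1) (Icc 0 1))
    (hderiv : ∀ u ∈ Icc (0:ℝ) 1, 0 < derivWithin h (Icc 0 1) u)
    -- `rinv : ℝ → (0,1)` is the inverse of `r`
    (rinv : ℝ → ℝ)
    (hrinv_mem : ∀ x : ℝ, rinv x ∈ Ioo (0:ℝ) 1)
    (hrinv_right : ∀ x : ℝ, rHomeo (rinv x) = x)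
    (hrinv_left : ∀ u ∈ Ioo (0:ℝ) 1, rinv (rHomeo u) = u) :
    Filter.limsup (fun x : ℝ => rHomeo (h (rinv x)) / x) atTop
        = 1 / derivWithin h (Icc 0 1) 1 ∧
    Filter.limsup (fun x : ℝ => rHomeo (h (rinv x)) / x) atBot
        = 1 / derivWithin h (Icc 0 1) 0 ∧
    Filter.IsBoundedUnder (· ≤ ·) atTop
        (fun x : ℝ => rHomeo (h (rinv x)) - x / derivWithin h (Icc 0 1) 1) ∧
    Filter.IsBoundedUnder (· ≥ ·) atBot
        (fun x : ℝ => rHomeo (h (rinv x)) - x / derivWithin h (Icc 0 1) 0) ∧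
    ∃ B : ℝ, 0 ≤ B ∧ ∀ x : ℝ,
      -(1 / derivWithin h (Icc 0 1) 0) * max (-x) 0 - B ≤ rHomeo (h (rinv x)) ∧
      rHomeo (h (rinv x)) ≤ (1 / derivWithin h (Icc 0 1) 1) * max x 0 + B :=
  conjugated_diffeo_asymptotically_linear_general h hC2 h0 h1 hderiv rinv hrinv_mem hrinv_right
end
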